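/- arXiv:1806.07491 — 4 statements merged into one kernel-verified Lean document; each statement's English description precedes it below -/
import Mathlib

section
/- (Weighting/filling construction) Let a, b, c, d, t, u, v be non-negative integers with 2 ≤ v ≤ u−1 and 0 ≤ t ≤ u−1. Suppose there exist: a resolvable (v+1)-GDD of type u^{v+1}; 4-GDDs of types a^u d^1 and b^u d^1; a 4-GDD of type a^v b^1 c^1 whenever tc > 0; and a 4-GDD of type a^v b^1 whenever c = 0 or t < u−1. Then there exists a 4-GDD of type (va+b)^u (ct+d)^1. -/
open Finset

/-- `IsGDD k L` asserts the existence of a group divisible design with all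
blocks of size `k` whose group sizes are listed in `L`: the point set is
`Fin L.sum`, the map `grp` assigns each point its group, group `i` has
exactly `L.get i` points, the block set `B` is a nonempty collection of
`k`-element subsets of the points, every pair of points from distinct groups
lies in exactly one block, and no block contains two distinct points of the
same group. -/
def IsGDD (k : ℕ) (L : List ℕ) : Prop :=
  ∃ (grp : Fin L.sum → Fin L.length) (B : Finset (Finset (Fin L.sum))),
    B.Nonempty ∧
    (∀ i : Fin L.length, (Finset.univ.filter fun x => grp x = i).card = L.get i) ∧
    (∀ b ∈ B, b.card = k) ∧
    (∀ x y : Fin L.sum, grp x ≠ grp y → ∃! b, b ∈ B ∧ x ∈ b ∧ y ∈ b) ∧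
    (∀ x y : Fin L.sum, x ≠ y → grp x = grp y → ∀ b ∈ B, x ∈ b → y ∉ b)

/-- `IsRGDD k L` asserts the existence of a resolvable `k`-GDD with group
sizes listed in `L`: a `k`-GDD as in `IsGDD`, together with a colouring `col`
of the blocks such that each colour class used is a parallel class, i.e. every
point lies in exactly one block of each used colour. -/
def IsRGDD (k : ℕ) (L : List ℕ) : Prop :=
  ∃ (grp : Fin L.sum → Fin L.length) (B : Finset (Finset (Fin L.sum)))
    (col : Finset (Fin L.sum) → ℕ),
    B.Nonempty ∧
    (∀ i : Fin L.length, (Finset.univ.filter fun x => grp x = i).card = L.get i) ∧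
    (∀ b ∈ B, b.card = k) ∧
    (∀ x y : Fin L.sum, grp x ≠ grp y → ∃! b, b ∈ B ∧ x ∈ b ∧ y ∈ b) ∧
    (∀ x y : Fin L.sum, x ≠ y → grp x = grp y → ∀ b ∈ B, x ∈ b → y ∉ b) ∧
    (∀ x : Fin L.sum, ∀ b ∈ B, ∃! b', b' ∈ B ∧ col b' = col b ∧ x ∈ b')

/-!
Delete one parallel class of the resolvable `(v+1)`-GDD: its `u` blocks become the groups of the
new design. Give the points of one group of the base design weight `b` and all others weight `a`,
and attach the `j`-th batch of `c` new points to every block of the `j`-th remaining parallel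
class (`j < t`). Two inflated points over different deleted blocks come either from one base
group or from a unique base block outside the deleted class, and an inflated point and a batch
lie in a unique block of the matching class. So filling each inflated group, together with `d`
further points, by a 4-GDD of type `a^u d^1` or `b^u d^1`, and each inflated remaining block,
together with its batch, by a 4-GDD of type `a^v b^1 c^1` (or `a^v b^1` when it gets no batch),
covers every pair of points from different new groups exactly once, and no other pair.
-/

section GDDOn

variable {P Q γ δ : Type*} [DecidableEq P]

structure IsGDDOn (k : ℕ) (f : P → γ) (S : Finset P) (B : Finset (Finset P)) : Prop where
  card_eq : ∀ blk ∈ B, blk.card = k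
  subset : ∀ blk ∈ B, blk ⊆ S
  existsUnique : ∀ p ∈ S, ∀ q ∈ S, f p ≠ f q → ∃! blk, blk ∈ B ∧ p ∈ blk ∧ q ∈ blk
  not_mem : ∀ p q, p ≠ q → f p = f q → ∀ blk ∈ B, p ∈ blk → q ∉ blk

def HasGDDOn (k : ℕ) (f : P → γ) (S : Finset P) : Prop :=
  ∃ B : Finset (Finset P), B.Nonempty ∧ IsGDDOn k f S B

theorem isGDD_iff_exists_hasGDDOn {k : ℕ} {L : List ℕ} :
    IsGDD k L ↔ ∃ grp : Fin L.sum → Fin L.length,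
      (∀ i, #{x | grp x = i} = L.get i) ∧ HasGDDOn k grp univ := by
  constructor
  · rintro ⟨grp, B, hne, hcard, hk, hcov, hexc⟩
    exact ⟨grp, hcard, B, hne, hk, fun _ _ => subset_univ _, fun p _ q _ => hcov p q, hexc⟩
  · rintro ⟨grp, hcard, B, hne, hk, -, hcov, hexc⟩
    exact ⟨grp, B, hne, hcard, hk, fun p q => hcov p (mem_univ _) q (mem_univ _), hexc⟩

theorem HasGDDOn.map [Fintype Q] [DecidableEq Q] {k : ℕ} {f : Q → γ} (h : HasGDDOn k f univ)
    (φ : Q ↪ P) {g : P → δ} (hφ : ∀ x y, g (φ x) = g (φ y) ↔ f x = f y) :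
    HasGDDOn k g (univ.map φ) := by
  obtain ⟨B, hne, hk, -, hcov, hexc⟩ := h
  have mem_map_iff (blk : Finset Q) (x : Q) : φ x ∈ blk.map φ ↔ x ∈ blk := mem_map' φ
  refine ⟨B.image (·.map φ), hne.image _, ⟨?_, ?_, ?_, ?_⟩⟩
  · simp only [mem_image]
    rintro _ ⟨blk, hblk, rfl⟩
    rw [card_map, hk blk hblk]
  · simp only [mem_image]
    rintro _ ⟨blk, -, rfl⟩
    exact map_subset_map.2 (subset_univ _)
  · simp only [mem_map, mem_univ, true_and]
    rintro _ ⟨x, rfl⟩ _ ⟨y, rfl⟩ hxy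
    obtain ⟨blk, ⟨hblk, hx, hy⟩, huniq⟩ :=
      hcov x (mem_univ _) y (mem_univ _) (mt (hφ x y).2 hxy)
    refine ⟨blk.map φ, ⟨mem_image_of_mem _ hblk, (mem_map_iff _ _).2 hx,
      (mem_map_iff _ _).2 hy⟩, ?_⟩
    simp only [mem_image]
    rintro _ ⟨⟨blk', hblk', rfl⟩, hx', hy'⟩
    rw [huniq blk' ⟨hblk', (mem_map_iff _ _).1 hx', (mem_map_iff _ _).1 hy'⟩]
  · simp only [mem_image]
    rintro p q hpq hg _ ⟨blk, hblk, rfl⟩ hp hq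
    obtain ⟨x, hx, rfl⟩ := mem_map.1 hp
    obtain ⟨y, hy, rfl⟩ := mem_map.1 hq
    exact hexc x y (ne_of_apply_ne φ hpq) ((hφ x y).1 hg) blk hblk hx hy

/-- `hinj`: inside a piece, two points in one group of `φ ∘ f` are already in one group of `f`. -/
theorem HasGDDOn.biUnion [Fintype P] {ι β : Type*} {k : ℕ} {I : Finset ι} (hI : I.Nonempty)
    {S : ι → Finset P} {f : P → β} (φ : β → δ) (hS : ∀ i ∈ I, HasGDDOn k f (S i))
    (hinj : ∀ i ∈ I, Set.InjOn φ (f '' S i))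
    (hcover : ∀ p q, φ (f p) ≠ φ (f q) → ∃! i, i ∈ I ∧ p ∈ S i ∧ q ∈ S i) :
    HasGDDOn k (fun p => φ (f p)) univ := by
  choose! B hBne hB using hS
  obtain ⟨i₀, hi₀⟩ := hI
  refine ⟨I.biUnion B, (hBne i₀ hi₀).mono (subset_biUnion_of_mem B hi₀), ⟨?_, ?_, ?_, ?_⟩⟩
  · simp only [mem_biUnion]
    rintro blk ⟨i, hi, hblk⟩
    exact (hB i hi).card_eq blk hblk
  · exact fun _ _ => subset_univ _
  · intro p _ q _ hpq
    obtain ⟨i, ⟨hi, hp, hq⟩, hiuniq⟩ := hcover p q hpq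
    obtain ⟨blk, ⟨hblk, hpb, hqb⟩, huniq⟩ :=
      (hB i hi).existsUnique p hp q hq fun h => hpq (congrArg φ h)
    refine ⟨blk, ⟨mem_biUnion.2 ⟨i, hi, hblk⟩, hpb, hqb⟩, ?_⟩
    rintro blk' ⟨hblk', hpb', hqb'⟩
    obtain ⟨j, hj, hblk'⟩ := mem_biUnion.1 hblk'
    have hsub := (hB j hj).subset blk' hblk'
    obtain rfl := hiuniq j ⟨hj, hsub hpb', hsub hqb'⟩
    exact huniq blk' ⟨hblk', hpb', hqb'⟩
  · intro p q hpq hφ blk hblk hp hq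
    obtain ⟨i, hi, hblk⟩ := mem_biUnion.1 hblk
    have hsub := (hB i hi).subset blk hblk
    exact (hB i hi).not_mem p q hpq (hinj i hi ⟨p, hsub hp, rfl⟩ ⟨q, hsub hq, rfl⟩ hφ)
      blk hblk hp hq

end GDDOn

section Relabelling

variable {P Q γ δ : Type*}

theorem exists_equiv_of_card_fiber_eq [Fintype Q] [Fintype P] [DecidableEq γ] {f : Q → γ}
    {g : P → γ} (h : ∀ c, Fintype.card {x // f x = c} = Fintype.card {p // g p = c}) :
    ∃ e : Q ≃ P, ∀ x, g (e x) = f x :=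
  ⟨Equiv.ofFiberEquiv fun c => Fintype.equivOfCardEq (h c), Equiv.ofFiberEquiv_map _⟩

theorem exists_equiv_of_map_univ_val_eq [Fintype Q] [Fintype P] [DecidableEq γ] {f : Q → γ}
    {g : P → γ} (h : univ.val.map f = univ.val.map g) : ∃ e : Q ≃ P, ∀ x, g (e x) = f x := by
  refine exists_equiv_of_card_fiber_eq fun c => ?_
  have := congrArg (Multiset.count c) h
  simp only [Multiset.count_map] at this
  simp only [Fintype.card_subtype, eq_comm (b := c)]
  exact this

theorem Fintype.card_subtype_coe_finset [DecidableEq P] (S : Finset P) (p : P → Prop)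
    [DecidablePred p] : Fintype.card {x : S // p x} = #{x ∈ S | p x} := by
  rw [Fintype.card_subtype, univ_eq_attach, filter_attach, card_map, card_attach]

theorem Finset.univ_val_map_coe {T : Finset γ} (n : γ → δ) :
    univ.val.map (fun y : T => n y) = T.val.map n := by
  rw [univ_eq_attach, attach_val]
  exact Multiset.attach_map_val' _ _

theorem exists_equiv_get_eq_of_val_map_eq [DecidableEq γ] {L : List ℕ} {T : Finset γ}
    {n : γ → ℕ} (hL : T.val.map n = L) : ∃ σ : Fin L.length ≃ T, ∀ i, n (σ i) = L.get i :=
  exists_equiv_of_map_univ_val_eq (f := L.get) (g := fun y : T => n y)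
    (by rw [Fin.univ_val_map, List.ofFn_get, univ_val_map_coe, hL])

/-- Since `IsGDD k L` only depends on the multiset of group sizes, it provides a GDD on any point
set `S` whose groups, labelled by `T`, have sizes `n` listing `L` in some order. -/
theorem IsGDD.hasGDDOn [DecidableEq P] [DecidableEq γ] {k : ℕ} {L : List ℕ} (h : IsGDD k L)
    {f : P → γ} {S : Finset P} {T : Finset γ} {n : γ → ℕ} (hL : T.val.map n = L)
    (hS : ∀ p ∈ S, f p ∈ T) (hn : ∀ y ∈ T, #{p ∈ S | f p = y} = n y) : HasGDDOn k f S := by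
  obtain ⟨grp, hgrp, hGDD⟩ := isGDD_iff_exists_hasGDDOn.1 h
  obtain ⟨σ, hσ⟩ := exists_equiv_get_eq_of_val_map_eq hL
  let lab (p : S) : Fin L.length := σ.symm ⟨f p, hS p p.2⟩
  have lab_eq_iff (p : S) (i : Fin L.length) : lab p = i ↔ f p = σ i := by
    rw [Equiv.symm_apply_eq, Subtype.ext_iff]
  obtain ⟨e, he⟩ := exists_equiv_of_card_fiber_eq (f := grp) (g := lab) fun i => by
    rw [Fintype.card_subtype, hgrp, Fintype.card_congr (Equiv.subtypeEquivRight (lab_eq_iff · i)),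
      Fintype.card_subtype_coe_finset S (f · = σ i), hn _ (σ i).2, hσ]
  have hS' : univ.map (e.toEmbedding.trans (Function.Embedding.subtype (· ∈ S))) = S := by
    rw [← map_map, map_univ_equiv, univ_eq_attach, attach_map_val]
  rw [← hS']
  refine hGDD.map _ fun x y => ?_
  rw [← he, ← he, σ.symm.injective.eq_iff, Subtype.mk.injEq]
  rfl

theorem HasGDDOn.isGDD [Fintype P] [DecidableEq P] [DecidableEq γ] {k : ℕ} {f : P → γ}
    (h : HasGDDOn k f univ) {L : List ℕ} {T : Finset γ} {n : γ → ℕ} (hL : T.val.map n = L)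
    (hS : ∀ p, f p ∈ T) (hn : ∀ y ∈ T, #{p | f p = y} = n y) : IsGDD k L := by
  obtain ⟨σ, hσ⟩ := exists_equiv_get_eq_of_val_map_eq hL
  let lab (p : P) : Fin L.length := σ.symm ⟨f p, hS p⟩
  have lab_eq_iff (p : P) (i : Fin L.length) : lab p = i ↔ f p = σ i := by
    rw [Equiv.symm_apply_eq, Subtype.ext_iff]
  have card_lab (i : Fin L.length) : #{p | lab p = i} = L.get i := by
    simp only [lab_eq_iff, hn _ (σ i).2, hσ]
  have hcard : Fintype.card P = L.sum := by
    rw [← card_univ, card_eq_sum_card_fiberwise (fun p _ => mem_univ (lab p))]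
    simp only [card_lab, List.get_eq_getElem, Fin.sum_univ_getElem]
  let e := Fintype.equivFinOfCardEq hcard
  refine isGDD_iff_exists_hasGDDOn.2 ⟨fun x => lab (e.symm x), fun i => ?_, ?_⟩
  · rw [← card_lab i, ← Fintype.card_subtype, ← Fintype.card_subtype]
    exact Fintype.card_congr (e.symm.subtypeEquiv fun _ => Iff.rfl)
  · rw [← map_univ_equiv e]
    refine h.map e.toEmbedding fun p q => ?_
    simp only [Equiv.coe_toEmbedding, Equiv.symm_apply_apply, lab]
    rw [σ.symm.injective.eq_iff, Subtype.mk.injEq]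

end Relabelling

section Multisets

variable {α γ : Type*}

theorem Multiset.coe_append_singleton (L : List α) (z : α) :
    ((L ++ [z] : List α) : Multiset α) = z ::ₘ L :=
  Multiset.coe_eq_coe.2 (List.perm_append_singleton z L)

theorem Finset.val_map_eq_replicate {T : Finset α} {w : α → ℕ} {a : ℕ} (h : ∀ x ∈ T, w x = a) :
    T.val.map w = List.replicate #T a := by
  rw [Multiset.map_congr rfl h, Multiset.map_const', Multiset.coe_replicate, card_val]

theorem Finset.insertNone_val_map_elim {T : Finset α} {w : α → ℕ} {L : List ℕ}
    (h : T.val.map w = L) (z : ℕ) :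
    (insertNone T).val.map (fun o => o.elim z w) = ↑(L ++ [z]) := by
  simp only [insertNone, OrderEmbedding.coe_ofMapLEIff, cons_val, map_val, Multiset.map_cons,
    Multiset.map_map, Multiset.coe_append_singleton, ← h]
  rfl

theorem Finset.val_map_ite_eq_of_image_eq_univ [Fintype γ] [DecidableEq γ] {grp : α → γ}
    {s : Finset α} (hinj : Set.InjOn grp s) (himg : s.image grp = univ) (γ₀ : γ) (a b : ℕ) :
    s.val.map (fun x => if grp x = γ₀ then b else a) =
      ↑(List.replicate (Fintype.card γ - 1) a ++ [b]) := by
  have hval : s.val.map grp = γ₀ ::ₘ (univ.erase γ₀).val := by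
    rw [← image_val_of_injOn hinj, himg, erase_val, Multiset.cons_erase (mem_univ_val γ₀)]
  have hrest : (univ.erase γ₀).val.map (fun g => if g = γ₀ then b else a) =
      List.replicate (Fintype.card γ - 1) a := by
    rw [val_map_eq_replicate fun g hg => if_neg (ne_of_mem_erase hg),
      card_erase_of_mem (mem_univ _), card_univ]
  rw [← Function.comp_def (fun g => if g = γ₀ then b else a) grp, ← Multiset.map_map, hval,
    Multiset.map_cons, if_pos rfl, hrest, Multiset.coe_append_singleton]

end Multisets

theorem Finset.card_eq_of_existsUnique {α β : Type*} {s : Finset α} {t : Finset β}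
    (r : α → β → Prop) (hs : ∀ a ∈ s, ∃! b, b ∈ t ∧ r a b) (ht : ∀ b ∈ t, ∃! a, a ∈ s ∧ r a b) :
    #s = #t := by
  refine card_bij (fun a ha => (hs a ha).exists.choose)
    (fun a ha => (hs a ha).exists.choose_spec.1) (fun a₁ ha₁ a₂ ha₂ h => ?_) (fun b hb => ?_)
  · obtain ⟨hb₁, hr₁⟩ := (hs a₁ ha₁).exists.choose_spec
    obtain ⟨-, hr₂⟩ := (hs a₂ ha₂).exists.choose_spec
    rw [h] at hr₁ hb₁
    exact (ht _ hb₁).unique ⟨ha₁, hr₁⟩ ⟨ha₂, hr₂⟩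
  · obtain ⟨a, ⟨ha, hr⟩, -⟩ := ht b hb
    exact ⟨a, ha, (hs a ha).unique (hs a ha).exists.choose_spec ⟨hb, hr⟩⟩

theorem Option.injOn_map {α β : Type*} {f : α → β} {s : Set (Option α)}
    (h : Set.InjOn f (some ⁻¹' s)) : Set.InjOn (Option.map f) s := by
  rintro (_ | x) hx (_ | y) hy hxy
  · rfl
  · simp at hxy
  · simp at hxy
  · exact congrArg some (h hx hy (Option.some_injective _ hxy))

section BaseDesign

variable {X γ : Type*} {k : ℕ} {grp : X → γ} {S : Finset X} {B : Finset (Finset X)}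
  {blk : Finset X}

theorem IsGDDOn.injOn (h : IsGDDOn k grp S B) (hblk : blk ∈ B) : Set.InjOn grp blk :=
  fun x hx y hy hxy => by_contra fun hne => h.not_mem x y hne hxy blk hblk hx hy

def IsResolution (B : Finset (Finset X)) (col : Finset X → ℕ) : Prop :=
  ∀ x, ∀ blk ∈ B, ∃! b, b ∈ B ∧ col b = col blk ∧ x ∈ b

theorem IsRGDD.exists_isGDDOn_isResolution {L : List ℕ} (h : IsRGDD k L) :
    ∃ (grp : Fin L.sum → Fin L.length) (B : Finset (Finset (Fin L.sum)))
      (col : Finset (Fin L.sum) → ℕ), B.Nonempty ∧ (∀ i, #{x | grp x = i} = L.get i) ∧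
        IsGDDOn k grp univ B ∧ IsResolution B col := by
  obtain ⟨grp, B, col, hne, hcard, hk, hcov, hexc, hres⟩ := h
  exact ⟨grp, B, col, hne, hcard,
    ⟨hk, fun _ _ => subset_univ _, fun p _ q _ => hcov p q, hexc⟩, hres⟩

variable [Fintype γ]

theorem IsGDDOn.image_eq_univ [DecidableEq γ] (h : IsGDDOn (Fintype.card γ) grp S B)
    (hblk : blk ∈ B) : blk.image grp = univ :=
  eq_univ_of_card _ (by rw [card_image_of_injOn (h.injOn hblk), h.card_eq blk hblk])

theorem IsGDDOn.existsUnique_mem_grp_eq [DecidableEq γ] (h : IsGDDOn (Fintype.card γ) grp S B)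
    (hblk : blk ∈ B) (g : γ) : ∃! x, x ∈ blk ∧ grp x = g := by
  obtain ⟨x, hx, rfl⟩ := mem_image.1 (h.image_eq_univ hblk ▸ mem_univ g)
  exact ⟨x, ⟨hx, rfl⟩, fun y ⟨hy, hxy⟩ => h.injOn hblk hy hx hxy⟩

/-- The parallel classes biject with the blocks through a point `x₀`, and these with the points
of any group other than that of `x₀`. -/
theorem IsResolution.card_image_col [Fintype X] [DecidableEq X] [DecidableEq γ]
    {col : Finset X → ℕ} {u : ℕ}
    (hres : IsResolution B col) (h : IsGDDOn (Fintype.card γ) grp univ B)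
    (hfib : ∀ g, #{x | grp x = g} = u) (hγ : 1 < Fintype.card γ) (hB : B.Nonempty) :
    #(B.image col) = u := by
  obtain ⟨b₀, hb₀⟩ := hB
  obtain ⟨x₀, hx₀⟩ : b₀.Nonempty := by
    rw [← card_pos, h.card_eq b₀ hb₀]
    omega
  obtain ⟨g, hg⟩ := Fintype.exists_ne_of_one_lt_card hγ (grp x₀)
  have h₁ : #(B.image col) = #{b ∈ B | x₀ ∈ b} := by
    refine card_eq_of_existsUnique (fun ρ b => col b = ρ) (fun ρ hρ => ?_) (fun b hb => ?_)
    · obtain ⟨b, hb, rfl⟩ := mem_image.1 hρ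
      obtain ⟨b', ⟨hb', hcol, hx₀b'⟩, huniq⟩ := hres x₀ b hb
      exact ⟨b', ⟨mem_filter.2 ⟨hb', hx₀b'⟩, hcol⟩,
        fun b'' ⟨hb'', hcol'⟩ => huniq b'' ⟨(mem_filter.1 hb'').1, hcol', (mem_filter.1 hb'').2⟩⟩
    · exact ⟨col b, ⟨mem_image_of_mem col (mem_filter.1 hb).1, rfl⟩, fun ρ ⟨_, hρ⟩ => hρ.symm⟩
  rw [h₁, ← hfib g]
  refine card_eq_of_existsUnique (fun b y => y ∈ b) (fun b hb => ?_) (fun y hy => ?_)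
  · obtain ⟨y, ⟨hyb, hy⟩, huniq⟩ := h.existsUnique_mem_grp_eq (mem_filter.1 hb).1 g
    exact ⟨y, ⟨by simpa using hy, hyb⟩, fun z ⟨hz, hzb⟩ => huniq z ⟨hzb, by simpa using hz⟩⟩
  · have hne : grp x₀ ≠ grp y := by
      rw [(mem_filter.1 hy).2]
      exact hg.symm
    obtain ⟨b, ⟨hb, hx₀b, hyb⟩, huniq⟩ := h.existsUnique x₀ (mem_univ _) y (mem_univ _) hne
    exact ⟨b, ⟨mem_filter.2 ⟨hb, hx₀b⟩, hyb⟩,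
      fun b' ⟨hb', hyb'⟩ => huniq b' ⟨(mem_filter.1 hb').1, (mem_filter.1 hb').2, hyb'⟩⟩

end BaseDesign

/-- `w x` copies `⟨x, i⟩` of each point `x`, the batches `(j, i)` of `c` new points for `j < t`,
and `d` further new points. -/
abbrev InflatedPoint {X : Type*} (w : X → ℕ) (t c d : ℕ) : Type _ :=
  (Σ x : X, Fin (w x)) ⊕ ((Fin t × Fin c) ⊕ Fin d)

namespace InflatedPoint

variable {X γ : Type*} {w : X → ℕ} {t c d : ℕ}

def base : InflatedPoint w t c d → Option X :=
  Sum.elim (fun q => some q.1) fun _ => none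

@[simp]
theorem base_inl (q : Σ x : X, Fin (w x)) :
    base (Sum.inl q : InflatedPoint w t c d) = some q.1 :=
  rfl

@[simp]
theorem base_inr (e : (Fin t × Fin c) ⊕ Fin d) :
    base (Sum.inr e : InflatedPoint w t c d) = none :=
  rfl

def copies (s : Finset X) : Finset (Σ x : X, Fin (w x)) := s.sigma fun _ => univ

@[simp]
theorem mem_copies {s : Finset X} {q : Σ x : X, Fin (w x)} : q ∈ copies s ↔ q.1 ∈ s := by
  simp [copies]

theorem card_copies (s : Finset X) : #(copies (w := w) s) = ∑ x ∈ s, w x := by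
  simp [copies]

theorem card_filter_mem_base_eq_some [DecidableEq X] {S : Finset (InflatedPoint w t c d)} {x : X}
    (hS : ∀ m, Sum.inl ⟨x, m⟩ ∈ S) : #{p ∈ S | base p = some x} = w x := by
  have : {p ∈ S | base p = some x} = disjSum (copies {x}) ∅ := by
    ext (⟨y, m⟩ | e)
    · simp only [mem_filter, base_inl, Option.some.injEq, inl_mem_disjSum, mem_copies,
        mem_singleton, and_iff_right_iff_imp]
      rintro rfl
      exact hS m
    · simp
  rw [this, card_disjSum, card_copies]
  simp

def classSet (col : Finset X → ℕ) (κ : Fin t → ℕ) (blk : Finset X) :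
    Finset (InflatedPoint w t c d) :=
  disjSum (copies blk) (disjSum ((univ.filter fun j => κ j = col blk) ×ˢ univ) ∅)

section ClassSet

variable {col : Finset X → ℕ} {κ : Fin t → ℕ} {blk : Finset X}

@[simp]
theorem inl_mem_classSet {q : Σ x : X, Fin (w x)} :
    (Sum.inl q : InflatedPoint w t c d) ∈ classSet col κ blk ↔ q.1 ∈ blk := by
  simp [classSet]

@[simp]
theorem inr_inl_mem_classSet {e : Fin t × Fin c} :
    (Sum.inr (Sum.inl e) : InflatedPoint w t c d) ∈ classSet col κ blk ↔ κ e.1 = col blk := by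
  simp [classSet]

@[simp]
theorem inr_inr_not_mem_classSet {e : Fin d} :
    (Sum.inr (Sum.inr e) : InflatedPoint w t c d) ∉ classSet col κ blk := by
  simp [classSet]

theorem mem_of_mem_classSet {p : InflatedPoint w t c d} {x : X} (hp : p ∈ classSet col κ blk)
    (hpx : base p = some x) : x ∈ blk := by
  rcases p with ⟨y, m⟩ | e | e <;> simp_all

theorem card_filter_mem_classSet_base_eq_none [DecidableEq X] (hκ : Function.Injective κ)
    {j : Fin t} (hj : κ j = col blk) :
    #{p ∈ (classSet col κ blk : Finset (InflatedPoint w t c d)) | base p = none} = c := by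
  have : {p ∈ (classSet col κ blk : Finset (InflatedPoint w t c d)) | base p = none} =
      disjSum ∅ (disjSum ({j} ×ˢ univ) ∅) := by
    ext (_ | ⟨j', m⟩ | _) <;> simp [classSet, ← hj, hκ.eq_iff, eq_comm]
  rw [this]
  simp

theorem hasGDDOn_classSet_of_κ_eq [DecidableEq X] (hκ : Function.Injective κ) {j : Fin t}
    (hj : κ j = col blk) {L : List ℕ} (hL : blk.val.map w = L) (h : IsGDD 4 (L ++ [c])) :
    HasGDDOn 4 base (classSet col κ blk : Finset (InflatedPoint w t c d)) := by
  refine h.hasGDDOn (T := insertNone blk) (n := fun o => o.elim c w)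
    (insertNone_val_map_elim hL c) ?_ ?_
  · rintro (⟨x, m⟩ | e | e) hp <;> simp_all
  · rintro (_ | x) hx
    · exact card_filter_mem_classSet_base_eq_none hκ hj
    · exact card_filter_mem_base_eq_some fun m => by simpa using hx

theorem hasGDDOn_classSet_of_forall_ne [DecidableEq X]
    (hne : ∀ e : Fin t × Fin c, κ e.1 ≠ col blk) {L : List ℕ}
    (hL : blk.val.map w = L) (h : IsGDD 4 L) :
    HasGDDOn 4 base (classSet col κ blk : Finset (InflatedPoint w t c d)) := by
  refine h.hasGDDOn (T := blk.map Function.Embedding.some) (n := fun o => o.elim 0 w)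
    (by rw [map_val, Multiset.map_map]; exact hL) ?_ ?_
  · rintro (⟨x, m⟩ | e | e) hp
    · simpa using hp
    · exact absurd (inr_inl_mem_classSet.1 hp) (hne e)
    · simp at hp
  · intro o ho
    obtain ⟨x, hx, rfl⟩ := mem_map.1 ho
    exact card_filter_mem_base_eq_some fun m => by simpa using hx

end ClassSet

section Pieces

variable (γ) [Fintype γ] in
/-- The pieces of the filling are indexed by the groups of the base design (inflated, with the `d`
further points) and the blocks outside the deleted parallel class (inflated, with their batch). -/
def pieces (B : Finset (Finset X)) (col : Finset X → ℕ) (ρ : ℕ) : Finset (γ ⊕ Finset X) :=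
  univ.disjSum {blk ∈ B | col blk ≠ ρ}

variable [Fintype γ] {B : Finset (Finset X)} {col : Finset X → ℕ} {ρ : ℕ}

@[simp]
theorem inl_mem_pieces (g : γ) : Sum.inl g ∈ pieces γ B col ρ := by
  simp [pieces]

@[simp]
theorem inr_mem_pieces {blk : Finset X} :
    Sum.inr blk ∈ pieces γ B col ρ ↔ blk ∈ B ∧ col blk ≠ ρ := by
  simp [pieces]

end Pieces

variable [Fintype X]

def fillSet [DecidableEq γ] (grp : X → γ) (g : γ) : Finset (InflatedPoint w t c d) :=
  disjSum (copies {x | grp x = g}) (disjSum ∅ univ)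

section FillSet

variable [DecidableEq γ] {grp : X → γ} {g : γ}

@[simp]
theorem inl_mem_fillSet {q : Σ x : X, Fin (w x)} :
    (Sum.inl q : InflatedPoint w t c d) ∈ fillSet grp g ↔ grp q.1 = g := by
  simp [fillSet]

@[simp]
theorem inr_inl_not_mem_fillSet {e : Fin t × Fin c} :
    (Sum.inr (Sum.inl e) : InflatedPoint w t c d) ∉ fillSet grp g := by
  simp [fillSet]

@[simp]
theorem inr_inr_mem_fillSet {e : Fin d} :
    (Sum.inr (Sum.inr e) : InflatedPoint w t c d) ∈ fillSet grp g := by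
  simp [fillSet]

theorem grp_eq_of_mem_fillSet {p : InflatedPoint w t c d} {x : X} (hp : p ∈ fillSet grp g)
    (hpx : base p = some x) : grp x = g := by
  rcases p with ⟨y, m⟩ | e | e <;> simp_all

theorem card_filter_mem_fillSet_base_eq_none [DecidableEq X] :
    #{p ∈ (fillSet grp g : Finset (InflatedPoint w t c d)) | base p = none} = d := by
  have : {p ∈ (fillSet grp g : Finset (InflatedPoint w t c d)) | base p = none} =
      disjSum ∅ (disjSum ∅ univ) := by
    ext (_ | _ | _) <;> simp
  rw [this]
  simp

theorem hasGDDOn_fillSet [DecidableEq X] {u a : ℕ}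
    (hfib : #{x | grp x = g} = u) (hw : ∀ x, grp x = g → w x = a)
    (h : IsGDD 4 (List.replicate u a ++ [d])) :
    HasGDDOn 4 base (fillSet grp g : Finset (InflatedPoint w t c d)) := by
  refine h.hasGDDOn (T := insertNone {x | grp x = g}) (n := fun o => o.elim d w) ?_ ?_ ?_
  · rw [← hfib]
    exact insertNone_val_map_elim (val_map_eq_replicate (by simpa using hw)) d
  · rintro (⟨x, m⟩ | e | e) hp <;> simp_all
  · rintro (_ | x) hx
    · exact card_filter_mem_fillSet_base_eq_none
    · exact card_filter_mem_base_eq_some fun m => by simpa using hx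

end FillSet

theorem card_filter_map_base_eq_some {δ : Type*} [DecidableEq δ] (R : X → δ) (r : δ) :
    #{p : InflatedPoint w t c d | (base p).map R = some r} = ∑ x with R x = r, w x := by
  have : ({p | (base p).map R = some r} : Finset (InflatedPoint w t c d)) =
      disjSum (copies {x | R x = r}) ∅ := by
    ext (_ | _) <;> simp
  rw [this, card_disjSum, card_copies]
  simp

theorem card_filter_base_eq_none [DecidableEq X] :
    #{p : InflatedPoint w t c d | base p = none} = c * t + d := by
  have : ({p | base p = none} : Finset (InflatedPoint w t c d)) = disjSum ∅ univ := by
    ext (_ | _) <;> simp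
  rw [this, card_disjSum]
  simp [mul_comm]

def piece [DecidableEq γ] (grp : X → γ) (col : Finset X → ℕ) (κ : Fin t → ℕ) :
    γ ⊕ Finset X → Finset (InflatedPoint w t c d) :=
  Sum.elim (fillSet grp) (classSet col κ)

@[simp]
theorem piece_inl [DecidableEq γ] (grp : X → γ) (col : Finset X → ℕ) (κ : Fin t → ℕ) (g : γ) :
    piece grp col κ (Sum.inl g) = (fillSet grp g : Finset (InflatedPoint w t c d)) :=
  rfl

@[simp]
theorem piece_inr [DecidableEq γ] (grp : X → γ) (col : Finset X → ℕ) (κ : Fin t → ℕ)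
    (blk : Finset X) :
    piece grp col κ (Sum.inr blk) = (classSet col κ blk : Finset (InflatedPoint w t c d)) :=
  rfl

theorem existsUnique_piece_copy_dpoint [Fintype γ] [DecidableEq γ] {grp : X → γ}
    {B : Finset (Finset X)} {col : Finset X → ℕ} {ρ : ℕ} {κ : Fin t → ℕ} {x : X}
    (mx : Fin (w x)) (e : Fin d) :
    ∃! i, i ∈ pieces γ B col ρ ∧ (Sum.inl ⟨x, mx⟩ : InflatedPoint w t c d) ∈ piece grp col κ i ∧
      (Sum.inr (Sum.inr e) : InflatedPoint w t c d) ∈ piece grp col κ i := by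
  refine ⟨Sum.inl (grp x), by simp, ?_⟩
  rintro (g | blk) ⟨hi, hx, hy⟩
  · simp only [piece_inl, inl_mem_fillSet] at hx
    rw [hx]
  · simp at hy

end InflatedPoint

/-- `B`, resolved by `col`, is the base design; `R x` is the block through `x` of the parallel
class of colour `ρ` that is deleted, and the blocks of colour `κ j` receive the `j`-th batch. -/
structure IsWeightingFrame {X γ : Type*} [Fintype X] [DecidableEq X] [Fintype γ] {t : ℕ}
    (grp : X → γ) (B : Finset (Finset X)) (col : Finset X → ℕ) (ρ : ℕ) (R : X → Finset X)
    (κ : Fin t → ℕ) : Prop where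
  isGDDOn : IsGDDOn (Fintype.card γ) grp univ B
  isResolution : IsResolution B col
  R_mem : ∀ x, R x ∈ B
  col_R : ∀ x, col (R x) = ρ
  mem_R : ∀ x, x ∈ R x
  κ_injective : Function.Injective κ
  κ_mem : ∀ j, κ j ∈ (B.image col).erase ρ

namespace IsWeightingFrame

open InflatedPoint

variable {X γ : Type*} [Fintype X] [DecidableEq X] [Fintype γ] {t c d : ℕ} {grp : X → γ}
  {B : Finset (Finset X)} {col : Finset X → ℕ} {ρ : ℕ} {R : X → Finset X} {κ : Fin t → ℕ}
  {blk : Finset X} {x y : X}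

theorem R_eq (F : IsWeightingFrame grp B col ρ R κ) (hblk : blk ∈ B) (hcol : col blk = ρ)
    (hx : x ∈ blk) : R x = blk :=
  (F.isResolution x blk hblk).unique ⟨F.R_mem x, (F.col_R x).trans hcol.symm, F.mem_R x⟩
    ⟨hblk, rfl, hx⟩

theorem eq_of_grp_eq_of_R_eq (F : IsWeightingFrame grp B col ρ R κ) (hg : grp x = grp y)
    (hR : R x = R y) : x = y :=
  by_contra fun hne => F.isGDDOn.not_mem x y hne hg (R x) (F.R_mem x) (F.mem_R x) (hR ▸ F.mem_R y)

theorem eq_of_mem_of_R_eq (F : IsWeightingFrame grp B col ρ R κ) (hblk : blk ∈ B)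
    (hcol : col blk ≠ ρ) (hx : x ∈ blk) (hy : y ∈ blk) (hR : R x = R y) : x = y := by
  by_contra hne
  obtain ⟨b, -, huniq⟩ := F.isGDDOn.existsUnique x (mem_univ _) y (mem_univ _)
    fun hg => hne (F.isGDDOn.injOn hblk hx hy hg)
  have hblkR : blk = R x := (huniq blk ⟨hblk, hx, hy⟩).trans
    (huniq (R x) ⟨F.R_mem x, F.mem_R x, hR ▸ F.mem_R y⟩).symm
  exact hcol (hblkR ▸ F.col_R x)

theorem existsUnique_col_eq_κ (F : IsWeightingFrame grp B col ρ R κ) (j : Fin t) (x : X) :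
    ∃! b, b ∈ B ∧ col b = κ j ∧ x ∈ b := by
  obtain ⟨b, hb, hbj⟩ := mem_image.1 (mem_of_mem_erase (F.κ_mem j))
  simpa only [hbj] using F.isResolution x b hb

theorem card_filter_col_eq [DecidableEq γ] {u : ℕ} (F : IsWeightingFrame grp B col ρ R κ)
    (γ₀ : γ) (hfib : #{x | grp x = γ₀} = u) : #{blk ∈ B | col blk = ρ} = u := by
  rw [← hfib]
  refine card_eq_of_existsUnique (fun blk x => x ∈ blk) (fun blk hblk => ?_) (fun x _ => ?_)
  · obtain ⟨x, ⟨hxb, hx⟩, huniq⟩ := F.isGDDOn.existsUnique_mem_grp_eq (mem_filter.1 hblk).1 γ₀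
    exact ⟨x, ⟨by simpa using hx, hxb⟩, fun y ⟨hy, hyb⟩ => huniq y ⟨hyb, by simpa using hy⟩⟩
  · refine ⟨R x, ⟨mem_filter.2 ⟨F.R_mem x, F.col_R x⟩, F.mem_R x⟩, fun blk ⟨hblk, hx⟩ => ?_⟩
    exact (F.R_eq (mem_filter.1 hblk).1 (mem_filter.1 hblk).2 hx).symm

theorem val_map_weight [DecidableEq γ] {a b v : ℕ} (F : IsWeightingFrame grp B col ρ R κ)
    (hv : Fintype.card γ = v + 1) (γ₀ : γ) (hblk : blk ∈ B) :
    blk.val.map (fun x => if grp x = γ₀ then b else a) = ↑(List.replicate v a ++ [b]) := by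
  rw [val_map_ite_eq_of_image_eq_univ (F.isGDDOn.injOn hblk) (F.isGDDOn.image_eq_univ hblk), hv,
    Nat.add_sub_cancel]

section Cover

variable [DecidableEq γ] {w : X → ℕ}

theorem existsUnique_piece_copy_copy_of_grp_eq (F : IsWeightingFrame grp B col ρ R κ)
    (mx : Fin (w x)) (my : Fin (w y)) (hR : R x ≠ R y) (hg : grp x = grp y) :
    ∃! i, i ∈ pieces γ B col ρ ∧ (Sum.inl ⟨x, mx⟩ : InflatedPoint w t c d) ∈ piece grp col κ i ∧
      (Sum.inl ⟨y, my⟩ : InflatedPoint w t c d) ∈ piece grp col κ i := by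
  refine ⟨Sum.inl (grp x), by simp [hg], ?_⟩
  rintro (g | blk) ⟨hi, hx, hy⟩
  · simp only [piece_inl, inl_mem_fillSet] at hx
    rw [hx]
  · simp only [inr_mem_pieces, piece_inr, inl_mem_classSet] at hi hx hy
    exact absurd (congrArg R (F.isGDDOn.injOn hi.1 hx hy hg)) hR

theorem existsUnique_piece_copy_copy_of_grp_ne (F : IsWeightingFrame grp B col ρ R κ)
    (mx : Fin (w x)) (my : Fin (w y)) (hR : R x ≠ R y) (hg : grp x ≠ grp y) :
    ∃! i, i ∈ pieces γ B col ρ ∧ (Sum.inl ⟨x, mx⟩ : InflatedPoint w t c d) ∈ piece grp col κ i ∧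
      (Sum.inl ⟨y, my⟩ : InflatedPoint w t c d) ∈ piece grp col κ i := by
  obtain ⟨b, ⟨hb, hxb, hyb⟩, huniq⟩ := F.isGDDOn.existsUnique x (mem_univ _) y (mem_univ _) hg
  have hcol : col b ≠ ρ := fun hcol =>
    hR ((F.R_eq hb hcol hxb).trans (F.R_eq hb hcol hyb).symm)
  refine ⟨Sum.inr b, by simp [hb, hcol, hxb, hyb], ?_⟩
  rintro (g | blk) ⟨hi, hx, hy⟩
  · simp only [piece_inl, inl_mem_fillSet] at hx hy
    exact absurd (hx.trans hy.symm) hg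
  · simp only [inr_mem_pieces, piece_inr, inl_mem_classSet] at hi hx hy
    rw [huniq blk ⟨hi.1, hx, hy⟩]

theorem existsUnique_piece_copy_batch (F : IsWeightingFrame grp B col ρ R κ)
    (mx : Fin (w x)) (e : Fin t × Fin c) :
    ∃! i, i ∈ pieces γ B col ρ ∧ (Sum.inl ⟨x, mx⟩ : InflatedPoint w t c d) ∈ piece grp col κ i ∧
      (Sum.inr (Sum.inl e) : InflatedPoint w t c d) ∈ piece grp col κ i := by
  obtain ⟨b, ⟨hb, hcol, hxb⟩, huniq⟩ := F.existsUnique_col_eq_κ e.1 x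
  have hκ : κ e.1 ≠ ρ := ne_of_mem_erase (F.κ_mem e.1)
  refine ⟨Sum.inr b, by simp [hb, hxb, hcol, hκ], ?_⟩
  rintro (g | blk) ⟨hi, hx, hy⟩
  · simp at hy
  · simp only [inr_mem_pieces, piece_inr, inl_mem_classSet, inr_inl_mem_classSet] at hi hx hy
    rw [huniq blk ⟨hi.1, hy.symm, hx⟩]

theorem existsUnique_piece_copy (F : IsWeightingFrame grp B col ρ R κ) (mx : Fin (w x))
    (q : InflatedPoint w t c d) (hq : some (R x) ≠ (base q).map R) :
    ∃! i, i ∈ pieces γ B col ρ ∧ (Sum.inl ⟨x, mx⟩ : InflatedPoint w t c d) ∈ piece grp col κ i ∧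
      q ∈ piece grp col κ i := by
  rcases q with ⟨y, my⟩ | e | e
  · have hR : R x ≠ R y := by simpa using hq
    by_cases hg : grp x = grp y
    · exact F.existsUnique_piece_copy_copy_of_grp_eq mx my hR hg
    · exact F.existsUnique_piece_copy_copy_of_grp_ne mx my hR hg
  · exact F.existsUnique_piece_copy_batch mx e
  · exact existsUnique_piece_copy_dpoint mx e

theorem existsUnique_piece (F : IsWeightingFrame grp B col ρ R κ) (p q : InflatedPoint w t c d)
    (h : (base p).map R ≠ (base q).map R) :
    ∃! i, i ∈ pieces γ B col ρ ∧ p ∈ piece grp col κ i ∧ q ∈ piece grp col κ i := by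
  rcases p with ⟨x, mx⟩ | e
  · exact F.existsUnique_piece_copy mx q h
  · rcases q with ⟨y, my⟩ | e'
    · obtain ⟨i, ⟨hi, hy, he⟩, huniq⟩ := F.existsUnique_piece_copy my (Sum.inr e) (Ne.symm h)
      exact ⟨i, ⟨hi, he, hy⟩, fun j ⟨hj, he', hy'⟩ => huniq j ⟨hj, hy', he'⟩⟩
    · simp at h

theorem injOn_piece (F : IsWeightingFrame grp B col ρ R κ) {i : γ ⊕ Finset X}
    (hi : i ∈ pieces γ B col ρ) :
    Set.InjOn (Option.map R) (base ''
      ((piece grp col κ i : Finset (InflatedPoint w t c d)) : Set (InflatedPoint w t c d))) := by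
  refine Option.injOn_map ?_
  rintro x ⟨p, hp, hpx⟩ y ⟨q, hq, hqy⟩ hR
  rcases i with g | blk
  · exact F.eq_of_grp_eq_of_R_eq
      ((grp_eq_of_mem_fillSet hp hpx).trans (grp_eq_of_mem_fillSet hq hqy).symm) hR
  · rw [inr_mem_pieces] at hi
    exact F.eq_of_mem_of_R_eq hi.1 hi.2 (mem_of_mem_classSet hp hpx) (mem_of_mem_classSet hq hqy) hR

theorem hasGDDOn_univ [Nonempty γ] (F : IsWeightingFrame grp B col ρ R κ)
    (hfill : ∀ g, HasGDDOn 4 base (fillSet grp g : Finset (InflatedPoint w t c d)))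
    (hclass : ∀ blk ∈ B, col blk ≠ ρ →
      HasGDDOn 4 base (classSet col κ blk : Finset (InflatedPoint w t c d))) :
    HasGDDOn 4 (fun p : InflatedPoint w t c d => (base p).map R) univ := by
  refine HasGDDOn.biUnion ⟨Sum.inl (Classical.arbitrary γ), inl_mem_pieces _⟩ (Option.map R)
    ?_ (fun i hi => F.injOn_piece hi) F.existsUnique_piece
  rintro (g | blk) hi
  · exact hfill g
  · rw [inr_mem_pieces] at hi
    exact hclass blk hi.1 hi.2

end Cover

section Weighting

variable [DecidableEq γ] {a b u v : ℕ}

theorem isGDD_of_hasGDDOn (F : IsWeightingFrame grp B col ρ R κ)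
    (hv : Fintype.card γ = v + 1) (γ₀ : γ) (hfib : ∀ g, #{x | grp x = g} = u)
    (h : HasGDDOn 4 (fun p : InflatedPoint (fun x => if grp x = γ₀ then b else a) t c d =>
      (base p).map R) univ) :
    IsGDD 4 (List.replicate u (v * a + b) ++ [c * t + d]) := by
  refine h.isGDD (T := insertNone {blk ∈ B | col blk = ρ})
    (n := fun o => o.elim (c * t + d) fun _ => v * a + b) ?_ ?_ ?_
  · rw [← F.card_filter_col_eq γ₀ (hfib γ₀)]
    exact insertNone_val_map_elim (val_map_eq_replicate fun _ _ => rfl) _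
  · rintro (⟨x, m⟩ | e) <;> simp [F.R_mem, F.col_R]
  · rintro (_ | blk) hblk
    · simpa using card_filter_base_eq_none
    · rw [some_mem_insertNone, mem_filter] at hblk
      have hR : ({x | R x = blk} : Finset X) = blk := by
        ext x
        simp only [mem_filter, mem_univ, true_and]
        exact ⟨fun h => h ▸ F.mem_R x, F.R_eq hblk.1 hblk.2⟩
      rw [card_filter_map_base_eq_some, hR, sum_eq_multiset_sum, F.val_map_weight hv γ₀ hblk.1]
      simp

theorem hasGDDOn_classSet (F : IsWeightingFrame grp B col ρ R κ)
    (hv : Fintype.card γ = v + 1) (γ₀ : γ) (hcolours : #((B.image col).erase ρ) = u - 1)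
    (habc : 0 < t * c → IsGDD 4 (List.replicate v a ++ [b, c]))
    (hab : c = 0 ∨ t < u - 1 → IsGDD 4 (List.replicate v a ++ [b]))
    (hblk : blk ∈ B) (hcol : col blk ≠ ρ) :
    HasGDDOn 4 base (classSet col κ blk :
      Finset (InflatedPoint (fun x => if grp x = γ₀ then b else a) t c d)) := by
  have hL := F.val_map_weight (a := a) (b := b) hv γ₀ hblk
  by_cases hbatch : ∃ j, κ j = col blk
  · obtain ⟨j, hj⟩ := hbatch
    rcases Nat.eq_zero_or_pos c with rfl | hc
    · exact hasGDDOn_classSet_of_forall_ne (fun e => e.2.elim0) hL (hab (Or.inl rfl))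
    · exact hasGDDOn_classSet_of_κ_eq F.κ_injective hj hL
        (by simpa using habc (Nat.mul_pos j.pos hc))
  · push Not at hbatch
    refine hasGDDOn_classSet_of_forall_ne (fun e => hbatch e.1) hL (hab (Or.inr ?_))
    have hsub : univ.map ⟨κ, F.κ_injective⟩ ⊆ (B.image col).erase ρ := fun _ h => by
      obtain ⟨j, -, rfl⟩ := mem_map.1 h
      exact F.κ_mem j
    have hcolblk : col blk ∈ (B.image col).erase ρ :=
      mem_erase.2 ⟨hcol, mem_image_of_mem col hblk⟩
    rw [← hcolours]
    simpa using
      card_lt_card ((ssubset_iff_of_subset hsub).2 ⟨col blk, hcolblk, by simpa using hbatch⟩)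

theorem isGDD (F : IsWeightingFrame grp B col ρ R κ) (hv : Fintype.card γ = v + 1) (γ₀ : γ)
    (hfib : ∀ g, #{x | grp x = g} = u) (hcolours : #((B.image col).erase ρ) = u - 1)
    (had : IsGDD 4 (List.replicate u a ++ [d])) (hbd : IsGDD 4 (List.replicate u b ++ [d]))
    (habc : 0 < t * c → IsGDD 4 (List.replicate v a ++ [b, c]))
    (hab : c = 0 ∨ t < u - 1 → IsGDD 4 (List.replicate v a ++ [b])) :
    IsGDD 4 (List.replicate u (v * a + b) ++ [c * t + d]) := by
  have : Nonempty γ := ⟨γ₀⟩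
  refine F.isGDD_of_hasGDDOn hv γ₀ hfib (F.hasGDDOn_univ (fun g => ?_)
    fun blk hblk hcol => F.hasGDDOn_classSet hv γ₀ hcolours habc hab hblk hcol)
  by_cases hg : g = γ₀
  · exact hasGDDOn_fillSet (hfib g) (fun x hx => if_pos (hx.trans hg)) hbd
  · exact hasGDDOn_fillSet (hfib g) (fun x hx => if_neg (hx ▸ hg)) had

end Weighting

end IsWeightingFrame

theorem fourGDD_weighting_construction_general (a b c d t u v : ℕ)
    (hv2 : 2 ≤ v) (htu : t ≤ u - 1)
    (hrgdd : IsRGDD (v + 1) (List.replicate (v + 1) u))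
    (had : IsGDD 4 (List.replicate u a ++ [d]))
    (hbd : IsGDD 4 (List.replicate u b ++ [d]))
    (habc : 0 < t * c → IsGDD 4 (List.replicate v a ++ [b, c]))
    (hab : c = 0 ∨ t < u - 1 → IsGDD 4 (List.replicate v a ++ [b])) :
    IsGDD 4 (List.replicate u (v * a + b) ++ [c * t + d]) := by
  obtain ⟨grp, B, col, ⟨b₀, hb₀⟩, hfib, hGDD, hres⟩ := hrgdd.exists_isGDDOn_isResolution
  have hv : Fintype.card (Fin (List.replicate (v + 1) u).length) = v + 1 := by simp
  replace hGDD : IsGDDOn (Fintype.card (Fin (List.replicate (v + 1) u).length)) grp univ B := by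
    rwa [hv]
  replace hfib : ∀ g, #{x | grp x = g} = u := by simpa using hfib
  have hcolours : #((B.image col).erase (col b₀)) = u - 1 := by
    rw [card_erase_of_mem (mem_image_of_mem col hb₀),
      hres.card_image_col hGDD hfib (by omega) ⟨b₀, hb₀⟩]
  obtain ⟨κ⟩ : Nonempty (Fin t ↪ (B.image col).erase (col b₀)) :=
    Function.Embedding.nonempty_of_card_le (by simpa [hcolours])
  choose R hR using fun x => (hres x b₀ hb₀).exists
  have F : IsWeightingFrame grp B col (col b₀) R (fun j => κ j) :=
    ⟨hGDD, hres, fun x => (hR x).1, fun x => (hR x).2.1, fun x => (hR x).2.2,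
      fun _ _ h => κ.injective (Subtype.ext h), fun j => (κ j).2⟩
  exact F.isGDD hv ⟨0, by simp⟩ hfib hcolours had hbd habc hab

/-- Weighting/filling construction: with `2 ≤ v ≤ u−1` and `0 ≤ t ≤ u−1`,
given a resolvable `(v+1)`-RGDD of type `u^(v+1)`, 4-GDDs of types
`a^u d^1` and `b^u d^1`, a 4-GDD of type `a^v b^1 c^1` whenever `tc > 0`,
and a 4-GDD of type `a^v b^1` whenever `c = 0` or `t < u−1`, there exists a
4-GDD of type `(va+b)^u (ct+d)^1`. -/
theorem fourGDD_weighting_construction (a b c d t u v : ℕ)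
    (hv2 : 2 ≤ v) (hvu : v ≤ u - 1) (htu : t ≤ u - 1)
    (hrgdd : IsRGDD (v + 1) (List.replicate (v + 1) u))
    (had : IsGDD 4 (List.replicate u a ++ [d]))
    (hbd : IsGDD 4 (List.replicate u b ++ [d]))
    (habc : 0 < t * c → IsGDD 4 (List.replicate v a ++ [b, c]))
    (hab : c = 0 ∨ t < u - 1 → IsGDD 4 (List.replicate v a ++ [b])) :
    IsGDD 4 (List.replicate u (v * a + b) ++ [c * t + d]) :=
  fourGDD_weighting_construction_general a b c d t u v hv2 htu hrgdd had hbd habc hab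
end

section
/- (Inflation by a DGDD) Suppose there exists a 4-GDD of type g_1^{t_1} g_2^{t_2} ... g_r^{t_r}, let u ≥ 4 with u ≠ 6, suppose there exists a 4-DGDD of type (u, 1^u)^4, and suppose for each i = 1, ..., r there exists a 4-GDD of type g_i^u m^1. Then there exists a 4-GDD of type (g_1 t_1 + g_2 t_2 + ... + g_r t_r)^u m^1. -/
open Finset

/-- `Is4DGDD s t` asserts the existence of a double group divisible design
with block size 4 of type `(s, 1^s)^t`: the point set `Fin (s*t)` is
partitioned into `t` groups of size `s` and into `s` holes of size `t`, each
group meeting each hole in exactly one point; the block set `B` is a nonempty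
collection of 4-element subsets such that every pair of points lying neither
in a common group nor in a common hole is in exactly one block, and no block
contains two distinct points of a common group or of a common hole. -/
def Is4DGDD (s t : ℕ) : Prop :=
  ∃ (grp : Fin (s * t) → Fin t) (hole : Fin (s * t) → Fin s)
    (B : Finset (Finset (Fin (s * t)))),
    B.Nonempty ∧
    (∀ i : Fin t, (Finset.univ.filter fun x => grp x = i).card = s) ∧
    (∀ j : Fin s, (Finset.univ.filter fun x => hole x = j).card = t) ∧
    (∀ (i : Fin t) (j : Fin s),
      (Finset.univ.filter fun x => grp x = i ∧ hole x = j).card = 1) ∧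
    (∀ b ∈ B, b.card = 4) ∧
    (∀ x y : Fin (s * t), grp x ≠ grp y → hole x ≠ hole y →
      ∃! b, b ∈ B ∧ x ∈ b ∧ y ∈ b) ∧
    (∀ x y : Fin (s * t), x ≠ y → (grp x = grp y ∨ hole x = hole y) →
      ∀ b ∈ B, x ∈ b → y ∉ b)

/-! Every point of the base GDD is replaced by `u` copies, one on each level `0, …, u - 1`,
and `m` new points are adjoined; the new groups are the levels together with the set of new
points. Two points on distinct levels over distinct base groups lie over a unique base block, and
are covered by the copy of the DGDD laid on that inflated block (its groups are the points of the
block, its holes the levels). Any other pair in distinct new groups lies over a single base group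
`i`, with the new points counted as lying over every group, and is covered by the fill GDD of
type `gᵢ^u m^1` placed on the copies of group `i` and the new points. The two families of pairs
partition all pairs in distinct new groups, so the union of these blocks is the required GDD. -/

variable {α β κ ι : Type*}

/-- A GDD with group map `grp` is the case `R x y ↔ grp x ≠ grp y`. -/
structure IsBlockDesign (k : ℕ) (B : Finset (Finset α)) (R : α → α → Prop) : Prop where
  card_eq : ∀ b ∈ B, b.card = k
  existsUnique : ∀ x y, x ≠ y → R x y → ∃! b, b ∈ B ∧ x ∈ b ∧ y ∈ b
  rel_of_mem : ∀ x y, x ≠ y → ∀ b ∈ B, x ∈ b → y ∈ b → R x y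

namespace IsBlockDesign

variable {k : ℕ} {B C : Finset (Finset α)} {R S : α → α → Prop}

theorem of_iff (h : IsBlockDesign k B R) (hRS : ∀ x y, R x y ↔ S x y) :
    IsBlockDesign k B S := by
  obtain rfl : R = S := funext₂ fun x y => propext (hRS x y)
  exact h

theorem map [DecidableEq β] (h : IsBlockDesign k B R) (f : α ↪ β) :
    IsBlockDesign k (B.image (Finset.map f)) (Relation.Map R f f) where
  card_eq := by
    simpa only [mem_image, forall_exists_index, and_imp, forall_apply_eq_imp_iff₂, card_map]
      using h.card_eq
  existsUnique := by
    rintro _ _ hxy ⟨x, y, hR, rfl, rfl⟩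
    obtain ⟨b, ⟨hb, hx, hy⟩, huniq⟩ := h.existsUnique x y (ne_of_apply_ne f hxy) hR
    refine ⟨b.map f, ⟨mem_image_of_mem _ hb, mem_map_of_mem f hx, mem_map_of_mem f hy⟩, ?_⟩
    rintro _ ⟨hc', hxc, hyc⟩
    obtain ⟨c, hc, rfl⟩ := mem_image.mp hc'
    rw [mem_map'] at hxc hyc
    rw [huniq c ⟨hc, hxc, hyc⟩]
  rel_of_mem := by
    rintro _ _ hxy _ hc' hxc hyc
    obtain ⟨c, hc, rfl⟩ := mem_image.mp hc'
    obtain ⟨x, hx, rfl⟩ := mem_map.mp hxc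
    obtain ⟨y, hy, rfl⟩ := mem_map.mp hyc
    exact ⟨x, y, h.rel_of_mem x y (ne_of_apply_ne f hxy) c hc hx hy, rfl, rfl⟩

theorem map_equiv [DecidableEq β] {S : β → β → Prop} (h : IsBlockDesign k B R)
    (e : α ≃ β) (hRS : ∀ x y, R x y ↔ S (e x) (e y)) :
    IsBlockDesign k (B.image (Finset.map e.toEmbedding)) S :=
  (h.map e.toEmbedding).of_iff fun x y => by
    rw [← e.apply_symm_apply x, ← e.apply_symm_apply y, Equiv.coe_toEmbedding,
      Relation.map_apply_apply e.injective e.injective, hRS]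

theorem union [DecidableEq α] (hB : IsBlockDesign k B R) (hC : IsBlockDesign k C S)
    (hRS : ∀ x y, R x y → ¬ S x y) : IsBlockDesign k (B ∪ C) fun x y => R x y ∨ S x y where
  card_eq b hb := (mem_union.mp hb).elim (hB.card_eq b) (hC.card_eq b)
  existsUnique x y hxy := by
    have key {B C : Finset (Finset α)} {R S : α → α → Prop} (hB : IsBlockDesign k B R)
        (hC : IsBlockDesign k C S) (hRS : R x y → ¬ S x y) (hR : R x y) :
        ∃! b, b ∈ B ∪ C ∧ x ∈ b ∧ y ∈ b := by
      obtain ⟨b, ⟨hb, hx, hy⟩, huniq⟩ := hB.existsUnique x y hxy hR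
      refine ⟨b, ⟨mem_union_left _ hb, hx, hy⟩, fun c ⟨hc, hxc, hyc⟩ => ?_⟩
      rcases mem_union.mp hc with hc | hc
      · exact huniq c ⟨hc, hxc, hyc⟩
      · exact absurd (hC.rel_of_mem x y hxy c hc hxc hyc) (hRS hR)
    rintro (hR | hS)
    · exact key hB hC (hRS x y) hR
    · rw [union_comm]
      exact key hC hB (fun hS hR => hRS x y hR hS) hS
  rel_of_mem x y hxy b hb hx hy := (mem_union.mp hb).imp
    (fun hb => hB.rel_of_mem x y hxy b hb hx hy) (fun hb => hC.rel_of_mem x y hxy b hb hx hy)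

theorem biUnion [DecidableEq α] {s : Finset κ} {F : κ → Finset (Finset α)}
    {R : κ → α → α → Prop} (h : ∀ t ∈ s, IsBlockDesign k (F t) (R t))
    (hR : ∀ t ∈ s, ∀ t' ∈ s, ∀ x y, R t x y → R t' x y → t = t') :
    IsBlockDesign k (s.biUnion F) fun x y => ∃ t ∈ s, R t x y where
  card_eq b hb := by
    obtain ⟨t, ht, hb⟩ := mem_biUnion.mp hb
    exact (h t ht).card_eq b hb
  existsUnique := by
    rintro x y hxy ⟨t, ht, hRt⟩
    obtain ⟨b, ⟨hb, hx, hy⟩, huniq⟩ := (h t ht).existsUnique x y hxy hRt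
    refine ⟨b, ⟨mem_biUnion.mpr ⟨t, ht, hb⟩, hx, hy⟩, fun c ⟨hc, hxc, hyc⟩ => ?_⟩
    obtain ⟨t', ht', hc⟩ := mem_biUnion.mp hc
    obtain rfl := hR t ht t' ht' x y hRt ((h t' ht').rel_of_mem x y hxy c hc hxc hyc)
    exact huniq c ⟨hc, hxc, hyc⟩
  rel_of_mem x y hxy b hb hx hy := by
    obtain ⟨t, ht, hb⟩ := mem_biUnion.mp hb
    exact ⟨t, ht, (h t ht).rel_of_mem x y hxy b hb hx hy⟩

end IsBlockDesign

theorem isGDD_iff {k : ℕ} {L : List ℕ} :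
    IsGDD k L ↔ ∃ (grp : Fin L.sum → Fin L.length) (B : Finset (Finset (Fin L.sum))),
      (∀ i, #{x | grp x = i} = L.get i) ∧ B.Nonempty ∧
        IsBlockDesign k B fun x y => grp x ≠ grp y := by
  constructor
  · rintro ⟨grp, B, hne, hcard, hk, hcov, hsep⟩
    exact ⟨grp, B, hcard, hne, hk, fun x y _ => hcov x y,
      fun x y hxy b hb hx hy hg => hsep x y hxy hg b hb hx hy⟩
  · rintro ⟨grp, B, hcard, hne, hB⟩
    exact ⟨grp, B, hne, hcard, hB.card_eq,
      fun x y h => hB.existsUnique x y (ne_of_apply_ne grp h) h,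
      fun x y hxy hg b hb hx hy => hB.rel_of_mem x y hxy b hb hx hy hg⟩

theorem exists_equiv_comp_eq [Fintype α] [Fintype β] [DecidableEq ι] {f : α → ι}
    {g : β → ι} (h : ∀ i, #{x | f x = i} = #{y | g y = i}) :
    ∃ e : α ≃ β, ∀ x, g (e x) = f x :=
  ⟨Equiv.ofFiberEquiv fun i =>
      Fintype.equivOfCardEq (by simpa only [Fintype.card_subtype] using h i),
    Equiv.ofFiberEquiv_map _⟩

theorem isGDD_iff_of_card_fiber [Fintype α] [DecidableEq α] [DecidableEq ι] {k : ℕ}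
    {L : List ℕ} (grp : α → ι) (σ : ι ≃ Fin L.length)
    (hcard : ∀ i, #{x | grp x = i} = L.get (σ i)) :
    IsGDD k L ↔
      ∃ B : Finset (Finset α), B.Nonempty ∧ IsBlockDesign k B fun x y => grp x ≠ grp y := by
  have hcard' (c : Fin L.length) : #{x | σ (grp x) = c} = L.get c := by
    simp_rw [← Equiv.eq_symm_apply, hcard, Equiv.apply_symm_apply]
  rw [isGDD_iff]
  constructor
  · rintro ⟨grp₀, B, hgrp₀, hne, hB⟩
    obtain ⟨e, he⟩ := exists_equiv_comp_eq (f := grp₀) (g := fun x => σ (grp x))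
      fun c => (hgrp₀ c).trans (hcard' c).symm
    refine ⟨_, hne.image _, hB.map_equiv e fun x y => ?_⟩
    rw [← he, ← he, σ.injective.ne_iff]
  · rintro ⟨B, hne, hB⟩
    have hα : Fintype.card α = L.sum := by
      rw [← card_univ, card_eq_sum_card_fiberwise (f := fun x => σ (grp x)) (t := univ)
        (fun _ _ => mem_coe.mpr (mem_univ _))]
      simp_rw [hcard', List.get_eq_getElem]
      exact Fin.sum_univ_getElem L
    let e := Fintype.equivFinOfCardEq hα
    refine ⟨fun y => σ (grp (e.symm y)), _, fun c => ?_, hne.image _,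
      hB.map_equiv e fun x y => by simp [σ.injective.ne_iff]⟩
    rw [← hcard' c]
    exact card_equiv e.symm fun y => by simp

theorem Is4DGDD.exists_isBlockDesign {s t : ℕ} (h : Is4DGDD s t) (γ δ : Type*) [Fintype γ]
    [Fintype δ] [DecidableEq γ] [DecidableEq δ] (hγ : Fintype.card γ = t)
    (hδ : Fintype.card δ = s) :
    ∃ D : Finset (Finset (γ × δ)), D.Nonempty ∧
      IsBlockDesign 4 D fun p q => p.1 ≠ q.1 ∧ p.2 ≠ q.2 := by
  obtain ⟨grp, hole, D, hne, -, -, hcell, hk, hcov, hsep⟩ := h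
  have hbij : Function.Bijective fun z => (grp z, hole z) := by
    refine ⟨fun z w hzw => ?_, fun ⟨i, j⟩ => ?_⟩
    · obtain ⟨hg, hh⟩ := Prod.mk.inj hzw
      exact card_le_one.mp (hcell (grp z) (hole z)).le z (by simp) w (by simp [hg, hh])
    · obtain ⟨z, hz⟩ := card_pos.mp (hcell i j ▸ Nat.one_pos)
      exact ⟨z, by simpa using hz⟩
  have hD : IsBlockDesign 4 D fun z w => grp z ≠ grp w ∧ hole z ≠ hole w :=
    ⟨hk, fun z w _ hzw => hcov z w hzw.1 hzw.2, fun z w hzw b hb hz hw =>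
      ⟨fun hg => hsep z w hzw (.inl hg) b hb hz hw,
        fun hh => hsep z w hzw (.inr hh) b hb hz hw⟩⟩
  let e := (Equiv.ofBijective _ hbij).trans
    ((Fintype.equivFinOfCardEq hγ).symm.prodCongr (Fintype.equivFinOfCardEq hδ).symm)
  exact ⟨_, hne.image _, hD.map_equiv e fun z w => by simp [e]⟩

namespace Inflation

open Function

variable (u m : ℕ)

/-- `.inl (a, j)` is the copy of the base point `a` on level `j`, and `.inr p` an adjoined point. -/
def grp : β × Fin u ⊕ Fin m → Fin (u + 1) :=
  Sum.elim (fun p => p.2.castSucc) fun _ => Fin.last u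

def blockRel (b : Finset β) : β × Fin u ⊕ Fin m → β × Fin u ⊕ Fin m → Prop
  | .inl (a, j), .inl (a', j') => a ∈ b ∧ a' ∈ b ∧ a ≠ a' ∧ j ≠ j'
  | _, _ => False

def LiesOver (g : β → ι) (i : ι) : β × Fin u ⊕ Fin m → Prop :=
  Sum.elim (fun p => g p.1 = i) fun _ => True

def groupRel (g : β → ι) (i : ι) (x y : β × Fin u ⊕ Fin m) : Prop :=
  LiesOver u m g i x ∧ LiesOver u m g i y ∧ grp u m x ≠ grp u m y

def blockEmb (b : Finset β) : b × Fin u ↪ β × Fin u ⊕ Fin m :=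
  ((Embedding.subtype _).prodMap (Embedding.refl _)).trans .inl

def groupEmb (g : β → ι) (i : ι) :
    {a // g a = i} × Fin u ⊕ Fin m ↪ β × Fin u ⊕ Fin m :=
  Embedding.sumMap ((Embedding.subtype _).prodMap (Embedding.refl _)) (Embedding.refl _)

theorem map_blockEmb (b : Finset β) (x y : β × Fin u ⊕ Fin m) :
    Relation.Map (fun p q : b × Fin u => p.1 ≠ q.1 ∧ p.2 ≠ q.2)
      (blockEmb u m b) (blockEmb u m b) x y ↔ blockRel u m b x y := by
  rcases x with ⟨a, j⟩ | p <;> rcases y with ⟨a', j'⟩ | q <;>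
    simp [Relation.Map, blockRel, blockEmb, and_assoc, and_left_comm, and_comm]

theorem map_groupEmb (g : β → ι) (i : ι) (x y : β × Fin u ⊕ Fin m) :
    Relation.Map (fun p q => grp u m p ≠ grp u m q)
      (groupEmb u m g i) (groupEmb u m g i) x y ↔ groupRel u m g i x y := by
  rcases x with ⟨a, j⟩ | p <;> rcases y with ⟨a', j'⟩ | q <;>
    simp [Relation.Map, groupRel, groupEmb, LiesOver, grp, and_left_comm, and_comm]

theorem card_filter_grp [Fintype β] {s : ℕ} (hs : Fintype.card β = s) (w : Fin (u + 1)) :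
    #{x : β × Fin u ⊕ Fin m | grp u m x = w} =
      (List.replicate u s ++ [m]).get (finCongr (by simp) w) := by
  induction w using Fin.lastCases with
  | last =>
    have : ({x | grp u m x = Fin.last u} : Finset (β × Fin u ⊕ Fin m)) = univ.map .inr := by
      ext (⟨a, j⟩ | p) <;> simp only [mem_filter, mem_univ, true_and, mem_map] <;> simp [grp]
    simp [this]
  | cast j =>
    have : ({x | grp u m x = j.castSucc} : Finset (β × Fin u ⊕ Fin m)) =
        univ.map ((Embedding.sectL β j).trans .inl) := by
      ext (⟨a, j'⟩ | p) <;> simp only [mem_filter, mem_univ, true_and, mem_map] <;>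
        simp [grp, eq_comm]
    simp [this, hs, List.getElem_append_left]

variable {u m} {k : ℕ} {g : β → ι} {B₀ : Finset (Finset β)} {x y : β × Fin u ⊕ Fin m}

theorem grp_ne_of_blockRel {b : Finset β} (h : blockRel u m b x y) :
    grp u m x ≠ grp u m y := by
  rcases x with ⟨a, j⟩ | p <;> rcases y with ⟨a', j'⟩ | q <;> simp only [blockRel] at h
  simpa [grp] using h.2.2.2

theorem eq_of_blockRel (hB₀ : IsBlockDesign k B₀ fun a a' => g a ≠ g a') {b b' : Finset β}
    (hb : b ∈ B₀) (hb' : b' ∈ B₀) (h : blockRel u m b x y) (h' : blockRel u m b' x y) :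
    b = b' := by
  rcases x with ⟨a, j⟩ | p <;> rcases y with ⟨a', j'⟩ | q <;> simp only [blockRel] at h h'
  obtain ⟨ha, ha', hne, -⟩ := h
  have hg := hB₀.rel_of_mem a a' hne b hb ha ha'
  exact (hB₀.existsUnique a a' hne hg).unique ⟨hb, ha, ha'⟩ ⟨hb', h'.1, h'.2.1⟩

theorem not_groupRel_of_blockRel (hB₀ : IsBlockDesign k B₀ fun a a' => g a ≠ g a')
    {b : Finset β} (hb : b ∈ B₀) (h : blockRel u m b x y) (i : ι) :
    ¬ groupRel u m g i x y := by
  rcases x with ⟨a, j⟩ | p <;> rcases y with ⟨a', j'⟩ | q <;> simp only [blockRel] at h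
  rintro ⟨hi, hi', -⟩
  exact hB₀.rel_of_mem a a' h.2.2.1 b hb h.1 h.2.1 (hi.trans hi'.symm)

theorem eq_of_groupRel {i i' : ι} (h : groupRel u m g i x y) (h' : groupRel u m g i' x y) :
    i = i' := by
  rcases x with ⟨a, j⟩ | p
  · exact h.1.symm.trans h'.1
  rcases y with ⟨a, j⟩ | q
  · exact h.2.1.symm.trans h'.2.1
  exact absurd rfl h.2.2

theorem grp_ne_iff (hB₀ : IsBlockDesign k B₀ fun a a' => g a ≠ g a') :
    grp u m x ≠ grp u m y ↔
      (∃ b ∈ B₀, blockRel u m b x y) ∨ ∃ i, groupRel u m g i x y := by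
  refine ⟨fun hxy => ?_, ?_⟩
  · rcases x with ⟨a, j⟩ | p <;> rcases y with ⟨a', j'⟩ | q
    · by_cases hg : g a = g a'
      · exact .inr ⟨g a, rfl, hg.symm, hxy⟩
      · obtain ⟨b, ⟨hb, ha, ha'⟩, -⟩ := hB₀.existsUnique a a' (ne_of_apply_ne g hg) hg
        exact .inl ⟨b, hb, ha, ha', ne_of_apply_ne g hg, fun hj => hxy (by simp [grp, hj])⟩
    · exact .inr ⟨g a, rfl, trivial, hxy⟩
    · exact .inr ⟨g a', trivial, rfl, hxy⟩
    · exact absurd rfl hxy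
  · rintro (⟨b, -, h⟩ | ⟨i, h⟩)
    exacts [grp_ne_of_blockRel h, h.2.2]

theorem exists_blockDesign [DecidableEq β] (h : Is4DGDD u 4) {b : Finset β}
    (hb : b.card = 4) : ∃ D, D.Nonempty ∧ IsBlockDesign 4 D (blockRel u m b) := by
  obtain ⟨D, hne, hD⟩ :=
    h.exists_isBlockDesign b (Fin u) (by simpa using hb) (Fintype.card_fin u)
  exact ⟨_, hne.image _, (hD.map (blockEmb u m b)).of_iff (map_blockEmb u m b)⟩

theorem exists_groupDesign [Fintype β] [DecidableEq β] [DecidableEq ι] {i : ι}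
    (h : IsGDD k (List.replicate u #{a | g a = i} ++ [m])) :
    ∃ F, IsBlockDesign k F (groupRel u m g i) := by
  obtain ⟨F, -, hF⟩ := (isGDD_iff_of_card_fiber (grp u m) (finCongr (by simp))
    (card_filter_grp u m (Fintype.card_subtype _))).mp h
  exact ⟨_, (hF.map (groupEmb u m g i)).of_iff (map_groupEmb u m g i)⟩

theorem isBlockDesign [DecidableEq β] [Fintype ι]
    (hB₀ : IsBlockDesign k B₀ fun a a' => g a ≠ g a') {k' : ℕ}
    {D : Finset β → Finset (Finset (β × Fin u ⊕ Fin m))}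
    (hD : ∀ b ∈ B₀, IsBlockDesign k' (D b) (blockRel u m b))
    {F : ι → Finset (Finset (β × Fin u ⊕ Fin m))}
    (hF : ∀ i, IsBlockDesign k' (F i) (groupRel u m g i)) :
    IsBlockDesign k' (B₀.biUnion D ∪ univ.biUnion F) fun x y => grp u m x ≠ grp u m y := by
  refine (IsBlockDesign.union (.biUnion hD ?_) (.biUnion (fun i _ => hF i) ?_) ?_).of_iff
    fun x y => by simpa only [mem_univ, true_and] using (grp_ne_iff hB₀).symm
  · exact fun b hb b' hb' x y => eq_of_blockRel hB₀ hb hb'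
  · exact fun i _ i' _ x y => eq_of_groupRel
  · rintro x y ⟨b, hb, h⟩ ⟨i, -, h'⟩
    exact not_groupRel_of_blockRel hB₀ hb h i h'

end Inflation

theorem fourGDD_inflation_by_DGDD_general (L : List ℕ) (u m : ℕ)
    (hL : IsGDD 4 L)
    (hdgdd : Is4DGDD u 4)
    (hfill : ∀ s ∈ L, IsGDD 4 (List.replicate u s ++ [m])) :
    IsGDD 4 (List.replicate u L.sum ++ [m]) := by
  classical
  obtain ⟨g, B₀, hg, ⟨b₀, hb₀⟩, hB₀⟩ := isGDD_iff.mp hL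
  choose! D hDne hD using fun b (hb : b ∈ B₀) =>
    Inflation.exists_blockDesign (m := m) hdgdd (hB₀.card_eq b hb)
  choose F hF using fun i => Inflation.exists_groupDesign (m := m) (g := g) (i := i)
    (by rw [hg i]; exact hfill _ (L.get_mem i))
  rw [isGDD_iff_of_card_fiber (Inflation.grp u m) (finCongr (by simp))
    (Inflation.card_filter_grp u m (Fintype.card_fin _))]
  exact ⟨_, (biUnion_nonempty.mpr ⟨b₀, hb₀, hDne b₀ hb₀⟩).mono subset_union_left,
    Inflation.isBlockDesign hB₀ hD hF⟩

/-- Inflation by a DGDD: if there is a 4-GDD whose group sizes are listed in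
`L` (i.e. of type `g₁^(t₁) ⋯ g_r^(t_r)`), `u ≥ 4`, `u ≠ 6`, there is a
4-DGDD of type `(u, 1^u)^4`, and for every group size `s` occurring in `L`
there is a 4-GDD of type `s^u m^1`, then there is a 4-GDD of type
`(g₁t₁ + g₂t₂ + ⋯ + g_rt_r)^u m^1`. -/
theorem fourGDD_inflation_by_DGDD (L : List ℕ) (u m : ℕ)
    (hu : 4 ≤ u) (hu6 : u ≠ 6)
    (hL : IsGDD 4 L)
    (hdgdd : Is4DGDD u 4)
    (hfill : ∀ s ∈ L, IsGDD 4 (List.replicate u s ++ [m])) :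
    IsGDD 4 (List.replicate u L.sum ++ [m]) :=
  fourGDD_inflation_by_DGDD_general L u m hL hdgdd hfill
end

section
/- Suppose g ≥ 4, u ≥ 4, g ≡ 1 (mod 3), m ≤ (u−1)/2, there exists a 4-DGDD of type (g, 1^g)^u, and there exists a 4-GDD of type 1^u m^1. Then there exists a 4-GDD of type g^u m^1. -/
open Finset

/-!
A design is read as a decomposition of a graph into `k`-cliques: a GDD is a clique decomposition
of the complete multipartite graph on its groups, and a 4-DGDD of type `(g, 1^g)^u` one of the
graph on `Fin u × Fin g` joining points that differ in both coordinates. The complete multipartite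
graph with the groups `{i} × Fin g` and one extra group of size `m` is the edge-disjoint union of
that DGDD graph and, for each hole `j`, a copy of the multipartite graph of type `1^u m^1` on
`Fin u × {j}` together with the extra group. Clique decompositions of edge-disjoint graphs combine
into one of their union.
-/

theorem Finset.card_filter_sum {α β : Type*} [Fintype α] [Fintype β] (p : α ⊕ β → Prop)
    [DecidablePred p] : #{x | p x} = #{a | p (.inl a)} + #{b | p (.inr b)} := by
  simp only [← Fintype.card_subtype, ← Fintype.card_sum]
  exact Fintype.card_congr Equiv.subtypeSum

namespace SimpleGraph

variable {V W : Type*} {G : SimpleGraph V} {H : SimpleGraph W} {k : ℕ} {B : Finset (Finset V)}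

structure IsCliqueDecomposition (G : SimpleGraph V) (k : ℕ) (B : Finset (Finset V)) : Prop where
  isNClique : ∀ b ∈ B, G.IsNClique k b
  existsUnique : ∀ ⦃x y⦄, G.Adj x y → ∃! b, b ∈ B ∧ x ∈ b ∧ y ∈ b

theorem isCliqueDecomposition_iff :
    G.IsCliqueDecomposition k B ↔ (∀ b ∈ B, #b = k) ∧
      (∀ x y, G.Adj x y → ∃! b, b ∈ B ∧ x ∈ b ∧ y ∈ b) ∧
      ∀ x y, x ≠ y → ¬G.Adj x y → ∀ b ∈ B, x ∈ b → y ∉ b := by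
  have hclique (b : Finset V) :
      G.IsClique (b : Set V) ↔ ∀ x y, x ≠ y → ¬G.Adj x y → x ∈ b → y ∉ b := by
    simp only [isClique_iff, Set.Pairwise, mem_coe]
    grind
  constructor
  · rintro ⟨hB, huniq⟩
    exact ⟨fun b hb ↦ (hB b hb).card_eq, fun x y ↦ @huniq x y,
      fun x y hxy hG b hb ↦ (hclique b).mp (hB b hb).isClique x y hxy hG⟩
  · rintro ⟨hcard, huniq, hclq⟩
    exact ⟨fun b hb ↦ ⟨(hclique b).mpr fun x y hxy hG ↦ hclq x y hxy hG b hb, hcard b hb⟩,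
      fun x y ↦ huniq x y⟩

theorem IsCliqueDecomposition.map [DecidableEq W] (f : V ↪ W)
    (h : G.IsCliqueDecomposition k B) :
    (G.map f).IsCliqueDecomposition k (B.image (Finset.map f)) := by
  refine ⟨?_, ?_⟩
  · simp only [mem_image, forall_exists_index, and_imp, forall_apply_eq_imp_iff₂]
    exact fun b hb ↦ (h.isNClique b hb).map
  · rintro _ _ ⟨-, x, y, hxy, rfl, rfl⟩
    obtain ⟨b, ⟨hb, hx, hy⟩, huniq⟩ := h.existsUnique hxy
    refine ⟨b.map f, ⟨mem_image_of_mem _ hb, mem_map_of_mem f hx, mem_map_of_mem f hy⟩, ?_⟩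
    rintro _ ⟨hmem, hx', hy'⟩
    obtain ⟨b', hb', rfl⟩ := mem_image.mp hmem
    rw [huniq b' ⟨hb', (mem_map' f).mp hx', (mem_map' f).mp hy'⟩]

theorem IsCliqueDecomposition.iSup {ι : Type*} [Fintype ι] [DecidableEq V]
    {G : ι → SimpleGraph V} {B : ι → Finset (Finset V)}
    (h : ∀ i, (G i).IsCliqueDecomposition k (B i))
    (hG : Pairwise fun i j ↦ Disjoint (G i) (G j)) :
    (⨆ i, G i).IsCliqueDecomposition k (univ.biUnion B) := by
  refine ⟨?_, ?_⟩
  · simp only [mem_biUnion, mem_univ, true_and, forall_exists_index]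
    exact fun b i hb ↦ ((h i).isNClique b hb).mono (le_iSup G i)
  · intro x y hxy
    obtain ⟨i, hi⟩ := iSup_adj.mp hxy
    obtain ⟨b, ⟨hb, hx, hy⟩, huniq⟩ := (h i).existsUnique hi
    refine ⟨b, ⟨mem_biUnion.mpr ⟨i, mem_univ i, hb⟩, hx, hy⟩, ?_⟩
    rintro b' ⟨hb', hx', hy'⟩
    obtain ⟨j, -, hb'⟩ := mem_biUnion.mp hb'
    have hj : (G j).Adj x y := ((h j).isNClique b' hb').isClique hx' hy' hxy.ne
    obtain rfl : i = j := by
      by_contra hij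
      exact disjoint_left.mp (hG hij) x y hi hj
    exact huniq b' ⟨hb', hx', hy'⟩

def HasCliqueDecomposition (G : SimpleGraph V) (k : ℕ) : Prop :=
  ∃ B : Finset (Finset V), B.Nonempty ∧ G.IsCliqueDecomposition k B

theorem HasCliqueDecomposition.of_iso (e : G ≃g H) (h : G.HasCliqueDecomposition k) :
    H.HasCliqueDecomposition k := by
  classical
  obtain ⟨B, hB, hdec⟩ := h
  have hmap : G.map e.toEquiv.toEmbedding = H := by
    ext x y
    rw [← comap_symm, comap_adj]
    exact e.symm.map_adj_iff
  exact ⟨_, hB.image _, hmap ▸ hdec.map _⟩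

def comapTopIso {P Q κ κ' : Type*} (e : P ≃ Q) (σ : κ ↪ κ') {f : P → κ} {g : Q → κ'}
    (h : ∀ a, g (e a) = σ (f a)) :
    (⊤ : SimpleGraph κ).comap f ≃g (⊤ : SimpleGraph κ').comap g where
  toEquiv := e
  map_rel_iff' := by simp [h]

section Inflation

variable (ι η M : Type*)

/- Points of `ι × η` are (group, hole) pairs; groups of the GDDs are labelled by `Option ι`,
with `none` labelling the extra group `M`. -/
abbrev doubleGroupGraph : SimpleGraph (ι × η) :=
  (⊤ : SimpleGraph ι).comap Prod.fst ⊓ (⊤ : SimpleGraph η).comap Prod.snd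

abbrev fillGraph : SimpleGraph (ι ⊕ M) :=
  (⊤ : SimpleGraph (Option ι)).comap (Sum.elim some fun _ ↦ none)

abbrev inflatedGraph : SimpleGraph ((ι × η) ⊕ M) :=
  (⊤ : SimpleGraph (Option ι)).comap (Sum.elim (some ∘ Prod.fst) fun _ ↦ none)

variable {ι η M}

def holeEmbedding (j : η) : ι ⊕ M ↪ (ι × η) ⊕ M :=
  Function.Embedding.sumMap (Function.Embedding.sectL ι j) (Function.Embedding.refl M)

@[simp]
theorem holeEmbedding_inl (j : η) (i : ι) : holeEmbedding (M := M) j (.inl i) = .inl (i, j) := rfl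

@[simp]
theorem holeEmbedding_inr (j : η) (z : M) : holeEmbedding (ι := ι) j (.inr z) = .inr z := rfl

def holePiece : Option η → SimpleGraph ((ι × η) ⊕ M)
  | none => (doubleGroupGraph ι η).map Function.Embedding.inl
  | some j => (fillGraph ι M).map (holeEmbedding j)

theorem inflatedGraph_eq_iSup_holePiece : inflatedGraph ι η M = ⨆ o, holePiece o := by
  ext x y
  simp only [iSup_adj, Option.exists, holePiece, map_adj]
  rcases x with ⟨a, j⟩ | z <;> rcases y with ⟨c, j'⟩ | w <;>
    simp [Sum.exists, ← and_or_left, or_comm, em]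

theorem pairwise_disjoint_holePiece :
    Pairwise fun o o' : Option η ↦ Disjoint (holePiece (ι := ι) (M := M) o) (holePiece o') := by
  rintro (_ | j) (_ | j') hne
  · exact absurd rfl hne
  all_goals
    simp only [disjoint_left, holePiece, map_adj, inf_adj, comap_adj, top_adj]
    grind [holeEmbedding_inl, holeEmbedding_inr, Function.Embedding.inl_apply]

theorem HasCliqueDecomposition.inflate [Fintype η] [DecidableEq ι] [DecidableEq η]
    [DecidableEq M] (hD : (doubleGroupGraph ι η).HasCliqueDecomposition k)
    {BF : Finset (Finset (ι ⊕ M))} (hF : (fillGraph ι M).IsCliqueDecomposition k BF) :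
    (inflatedGraph ι η M).HasCliqueDecomposition k := by
  obtain ⟨BD, hBD, hD⟩ := hD
  let blocks : Option η → Finset (Finset ((ι × η) ⊕ M))
    | none => BD.image (Finset.map Function.Embedding.inl)
    | some j => BF.image (Finset.map (holeEmbedding j))
  refine ⟨univ.biUnion blocks, ?_, ?_⟩
  · obtain ⟨b, hb⟩ := hBD
    exact ⟨_, mem_biUnion.mpr ⟨none, mem_univ _, mem_image_of_mem _ hb⟩⟩
  · rw [inflatedGraph_eq_iSup_holePiece]
    refine IsCliqueDecomposition.iSup ?_ pairwise_disjoint_holePiece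
    rintro (_ | j)
    exacts [hD.map _, hF.map _]

end Inflation

end SimpleGraph

open SimpleGraph

theorem isGDD_iff_exists_hasCliqueDecomposition {k : ℕ} {L : List ℕ} :
    IsGDD k L ↔ ∃ grp : Fin L.sum → Fin L.length, (∀ i, #{x | grp x = i} = L.get i) ∧
      ((⊤ : SimpleGraph _).comap grp).HasCliqueDecomposition k := by
  simp only [IsGDD, HasCliqueDecomposition, isCliqueDecomposition_iff, comap_adj, top_adj,
    ne_eq, not_not]
  constructor
  · rintro ⟨grp, B, hB, hgrp, hdec⟩
    exact ⟨grp, hgrp, B, hB, hdec⟩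
  · rintro ⟨grp, hgrp, B, hB, hdec⟩
    exact ⟨grp, B, hB, hgrp, hdec⟩

theorem isGDD_iff_hasCliqueDecomposition {P κ : Type*} [Fintype P] [DecidableEq κ] {k : ℕ}
    {L : List ℕ} (grp : P → κ) (σ : Fin L.length ≃ κ)
    (hgrp : ∀ i, #{x | grp x = σ i} = L.get i) :
    IsGDD k L ↔ ((⊤ : SimpleGraph κ).comap grp).HasCliqueDecomposition k := by
  rw [isGDD_iff_exists_hasCliqueDecomposition]
  constructor
  · rintro ⟨grp', hgrp', hdec⟩
    have hfiber (c : κ) :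
        Fintype.card {a // σ (grp' a) = c} = Fintype.card {x // grp x = c} := by
      obtain ⟨i, rfl⟩ := σ.surjective c
      simp only [Fintype.card_subtype, EmbeddingLike.apply_eq_iff_eq, hgrp, hgrp']
    let e := Equiv.ofFiberEquiv fun c ↦ Fintype.equivOfCardEq (hfiber c)
    exact hdec.of_iso (comapTopIso e σ.toEmbedding (Equiv.ofFiberEquiv_map _))
  · intro hdec
    have hcard : Fintype.card P = L.sum := by
      rw [← Fin.sum_univ_getElem, Fintype.card,
        card_eq_sum_card_fiberwise (f := σ.symm ∘ grp) fun x _ ↦ mem_univ _]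
      simp [Equiv.symm_apply_eq, hgrp]
    let e := Fintype.equivFinOfCardEq hcard
    refine ⟨σ.symm ∘ grp ∘ e.symm, fun i ↦ ?_, hdec.of_iso (comapTopIso e σ.symm.toEmbedding ?_)⟩
    · rw [← hgrp i]
      exact card_equiv e.symm (by simp [Equiv.symm_apply_eq])
    · simp

theorem isGDD_replicate_append_iff {P : Type*} [Fintype P] {k u c m : ℕ}
    (grp : P → Option (Fin u)) (hsome : ∀ j, #{x | grp x = some j} = c)
    (hnone : #{x | grp x = none} = m) :
    IsGDD k (List.replicate u c ++ [m]) ↔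
      ((⊤ : SimpleGraph (Option (Fin u))).comap grp).HasCliqueDecomposition k := by
  let σ := (finCongr (by simp : (List.replicate u c ++ [m]).length = u + 1)).trans
    finSuccEquivLast
  refine isGDD_iff_hasCliqueDecomposition grp σ fun i ↦ ?_
  obtain ⟨o, rfl⟩ := σ.symm.surjective i
  rw [Equiv.apply_symm_apply]
  cases o <;> simp [σ, hsome, hnone]

theorem Is4DGDD.hasCliqueDecomposition {s t : ℕ} (h : Is4DGDD s t) :
    (doubleGroupGraph (Fin t) (Fin s)).HasCliqueDecomposition 4 := by
  obtain ⟨grp, hole, B, hB, -, -, hpoint, hcard, hcov, hforb⟩ := h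
  have hbij : Function.Bijective fun x ↦ (grp x, hole x) := by
    constructor
    · intro x y hxy
      simp only [Prod.mk.injEq] at hxy
      exact card_le_one.mp (hpoint (grp x) (hole x)).le x (by simp) y (by simp [hxy])
    · rintro ⟨i, j⟩
      obtain ⟨x, hx⟩ := card_pos.mp ((hpoint i j).symm ▸ one_pos)
      exact ⟨x, by simpa using hx⟩
  refine HasCliqueDecomposition.of_iso (Iso.comap (Equiv.ofBijective _ hbij) _)
    ⟨B, hB, isCliqueDecomposition_iff.mpr ⟨hcard, ?_, ?_⟩⟩
  · simpa using hcov
  · simpa [or_iff_not_imp_left] using hforb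

theorem fourGDD_from_DGDD_and_fill_general (g u m : ℕ)
    (hdgdd : Is4DGDD g u)
    (hfill : IsGDD 4 (List.replicate u 1 ++ [m])) :
    IsGDD 4 (List.replicate u g ++ [m]) := by
  obtain ⟨BF, -, hF⟩ := (isGDD_replicate_append_iff (Sum.elim some fun _ : Fin m ↦ none)
    (by simp [card_filter_sum, filter_eq']) (by simp [card_filter_sum])).mp hfill
  refine (isGDD_replicate_append_iff
    (Sum.elim (some ∘ Prod.fst) fun _ : Fin m ↦ none : Fin u × Fin g ⊕ Fin m → _)
    (fun j ↦ ?_) (by simp [card_filter_sum])).mpr (hdgdd.hasCliqueDecomposition.inflate hF)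
  simp [card_filter_sum, ← univ_product_univ, filter_product_left (· = j), filter_eq']

/-- If `g ≥ 4`, `u ≥ 4`, `g ≡ 1 (mod 3)`, `m ≤ (u−1)/2`, there exists a
4-DGDD of type `(g, 1^g)^u` and a 4-GDD of type `1^u m^1`, then there exists
a 4-GDD of type `g^u m^1`. -/
theorem fourGDD_from_DGDD_and_fill (g u m : ℕ)
    (hg : 4 ≤ g) (hu : 4 ≤ u) (hg3 : g % 3 = 1) (hm : 2 * m ≤ u - 1)
    (hdgdd : Is4DGDD g u)
    (hfill : IsGDD 4 (List.replicate u 1 ++ [m])) :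
    IsGDD 4 (List.replicate u g ++ [m]) :=
  fourGDD_from_DGDD_and_fill_general g u m hdgdd hfill
end

section
/- Let a and b be positive integers. If there exists a 4-GDD of type (3a)^4 (6a)^1 (3b)^1, then a ≤ b ≤ 2a. -/
/-!
Fix a point `x` and let `r` be the number of blocks through it. These blocks, with `x` removed,
partition the points outside the group of `x`, so `(k - 1) r = v - |G(x)|`. Each block through `x`
meets any other group `G` at most once and every point of `G` lies on one of them, so `|G| ≤ r`.
Hence `(k - 1) |G| + |G(x)| ≤ v`. For a point of a group of size `3a` and `G` the group of size
`6a` this gives `a ≤ b`; for a point of the group of size `6a` and `G` the group of size `3b` it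
gives `b ≤ 2a`.
-/

open Finset

structure IsGroupDivisible {α ι : Type*} (grp : α → ι) (B : Finset (Finset α)) (k : ℕ) : Prop where
  card_eq : ∀ b ∈ B, b.card = k
  existsUnique_block : ∀ x y, grp x ≠ grp y → ∃! b, b ∈ B ∧ x ∈ b ∧ y ∈ b
  notMem_of_grp_eq : ∀ x y, x ≠ y → grp x = grp y → ∀ b ∈ B, x ∈ b → y ∉ b

namespace IsGroupDivisible

variable {α ι : Type*} {grp : α → ι} {B : Finset (Finset α)} {k : ℕ}

theorem grp_ne_of_mem (hD : IsGroupDivisible grp B k) {b : Finset α} (hb : b ∈ B) {x y : α}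
    (hx : x ∈ b) (hy : y ∈ b) (hxy : x ≠ y) : grp x ≠ grp y :=
  fun h => hD.notMem_of_grp_eq x y hxy h b hb hx hy

variable [DecidableEq ι]

theorem card_filter_grp_eq_le_one (hD : IsGroupDivisible grp B k) {b : Finset α} (hb : b ∈ B)
    (j : ι) : (b.filter fun y => grp y = j).card ≤ 1 := by
  refine card_le_one.2 fun y hy z hz => ?_
  rw [mem_filter] at hy hz
  by_contra hyz
  exact hD.grp_ne_of_mem hb hy.1 hz.1 hyz (hy.2.trans hz.2.symm)

variable [Fintype α] [DecidableEq α]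

theorem mul_card_blocks_through (hD : IsGroupDivisible grp B k) (x : α) :
    (k - 1) * (B.filter (x ∈ ·)).card = (univ.filter fun y => grp y ≠ grp x).card := by
  have hunion : (B.filter (x ∈ ·)).biUnion (·.erase x) = univ.filter fun y => grp y ≠ grp x := by
    ext y
    simp only [mem_biUnion, mem_filter, mem_erase, mem_univ, true_and]
    constructor
    · rintro ⟨b, ⟨hb, hxb⟩, hyx, hyb⟩
      exact hD.grp_ne_of_mem hb hyb hxb hyx
    · intro hy
      obtain ⟨b, ⟨hb, hxb, hyb⟩, -⟩ := hD.existsUnique_block x y (Ne.symm hy)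
      exact ⟨b, ⟨hb, hxb⟩, fun h => hy (h ▸ rfl), hyb⟩
  have hdisj : (B.filter (x ∈ ·) : Set (Finset α)).PairwiseDisjoint (·.erase x) := by
    intro b₁ hb₁ b₂ hb₂ hne
    simp only [coe_filter, Set.mem_ofPred_eq] at hb₁ hb₂
    refine disjoint_left.2 fun y hy₁ hy₂ => hne ?_
    rw [mem_erase] at hy₁ hy₂
    obtain ⟨b, -, huniq⟩ :=
      hD.existsUnique_block x y (hD.grp_ne_of_mem hb₁.1 hb₁.2 hy₁.2 (Ne.symm hy₁.1))
    exact (huniq b₁ ⟨hb₁.1, hb₁.2, hy₁.2⟩).trans (huniq b₂ ⟨hb₂.1, hb₂.2, hy₂.2⟩).symm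
  rw [← hunion, card_biUnion hdisj, sum_const_nat fun b hb => ?_, mul_comm]
  rw [mem_filter] at hb
  rw [card_erase_of_mem hb.2, hD.card_eq b hb.1]

theorem card_grp_eq_le_card_blocks_through (hD : IsGroupDivisible grp B k) {x : α} {j : ι}
    (hxj : grp x ≠ j) : (univ.filter fun y => grp y = j).card ≤ (B.filter (x ∈ ·)).card := by
  have hsub : (univ.filter fun y => grp y = j)
      ⊆ (B.filter (x ∈ ·)).biUnion fun b => b.filter fun y => grp y = j := by
    intro y hy
    rw [mem_filter] at hy
    obtain ⟨b, ⟨hb, hxb, hyb⟩, -⟩ := hD.existsUnique_block x y (hy.2 ▸ hxj)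
    exact mem_biUnion.2 ⟨b, mem_filter.2 ⟨hb, hxb⟩, mem_filter.2 ⟨hyb, hy.2⟩⟩
  calc (univ.filter fun y => grp y = j).card
      ≤ (B.filter (x ∈ ·)).card * 1 :=
        (card_le_card hsub).trans <| card_biUnion_le_card_mul _ _ _ fun b hb =>
          hD.card_filter_grp_eq_le_one (mem_filter.1 hb).1 j
    _ = (B.filter (x ∈ ·)).card := mul_one _

theorem mul_card_grp_eq_add_card_grp_eq_le (hD : IsGroupDivisible grp B k) {x : α} {j : ι}
    (hxj : grp x ≠ j) :
    (k - 1) * (univ.filter fun y => grp y = j).card + (univ.filter fun y => grp y = grp x).card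
      ≤ Fintype.card α := by
  calc (k - 1) * (univ.filter fun y => grp y = j).card + (univ.filter fun y => grp y = grp x).card
      ≤ (k - 1) * (B.filter (x ∈ ·)).card + (univ.filter fun y => grp y = grp x).card := by
        gcongr
        exact hD.card_grp_eq_le_card_blocks_through hxj
    _ = Fintype.card α := by
        rw [hD.mul_card_blocks_through, add_comm, card_filter_add_card_filter_not, card_univ]

end IsGroupDivisible

theorem IsGDD.mul_get_add_get_le_sum {k : ℕ} {L : List ℕ} (h : IsGDD k L) {i j : Fin L.length}
    (hij : i ≠ j) (hi : 0 < L.get i) : (k - 1) * L.get j + L.get i ≤ L.sum := by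
  classical
  obtain ⟨grp, B, -, hsize, hcard, hpair, hsame⟩ := h
  obtain ⟨x, hx⟩ : ∃ x, grp x = i := by
    obtain ⟨x, hx⟩ := card_pos.1 ((hsize i).symm ▸ hi)
    exact ⟨x, (mem_filter.1 hx).2⟩
  have hD : IsGroupDivisible grp B k := ⟨hcard, hpair, hsame⟩
  simpa [hx, hsize] using hD.mul_card_grp_eq_add_card_grp_eq_le (hx ▸ hij : grp x ≠ j)

theorem bounds_of_fourGDD_3a4_6a_3b_general (a b : ℕ) (ha : 0 < a)
    (h : IsGDD 4 (List.replicate 4 (3 * a) ++ [6 * a, 3 * b])) :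
    a ≤ b ∧ b ≤ 2 * a := by
  have hsum : (List.replicate 4 (3 * a) ++ [6 * a, 3 * b]).sum = 18 * a + 3 * b := by
    simp only [List.sum_append, List.sum_replicate, List.sum_cons, List.sum_nil, smul_eq_mul]
    ring
  have h04 : 3 * (6 * a) + 3 * a ≤ 18 * a + 3 * b :=
    hsum ▸ h.mul_get_add_get_le_sum (i := ⟨0, by simp⟩) (j := ⟨4, by simp⟩) (by simp)
      (Nat.mul_pos three_pos ha)
  have h45 : 3 * (3 * b) + 6 * a ≤ 18 * a + 3 * b :=
    hsum ▸ h.mul_get_add_get_le_sum (i := ⟨4, by simp⟩) (j := ⟨5, by simp⟩) (by simp)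
      (Nat.mul_pos (by norm_num) ha)
  omega

/-- If `a` and `b` are positive integers and there exists a 4-GDD of type
`(3a)^4 (6a)^1 (3b)^1`, then `a ≤ b ≤ 2a`. -/
theorem bounds_of_fourGDD_3a4_6a_3b (a b : ℕ) (ha : 0 < a) (hb : 0 < b)
    (h : IsGDD 4 (List.replicate 4 (3 * a) ++ [6 * a, 3 * b])) :
    a ≤ b ∧ b ≤ 2 * a :=
  bounds_of_fourGDD_3a4_6a_3b_general a b ha h
end
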